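/- arXiv:2005.10199 — 4 statements merged into one kernel-verified Lean document; each statement's English description precedes it below -/
import Mathlib

section
/- GLODF via pre-contingency network (Theorem 4, part 2): Let F ⊊ E be a non-cut set of edges of the connected graph G. Then the generalized line outage distribution factor matrix satisfies B_{−F}·C_{−F}^T·A_{−F}·C_F = B_{−F}·C_{−F}^T·A·C_F·(I − B_F·C_F^T·A·C_F)^{−1}, i.e., K^F = D_{−FF}·(I − D_{FF})^{−1}, where A_{−F} is the padded inverse reduced Laplacian of the post-contingency graph G with F removed. -/
open Matrix Finset

variable {n m : ℕ}

/-- Nodes `a` and `b` are joined by some edge in the edge set `S`. -/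
def edgeAdj (src tgt : Fin m → Fin (n + 1)) (S : Finset (Fin m)) (a b : Fin (n + 1)) : Prop :=
  ∃ e ∈ S, (src e = a ∧ tgt e = b) ∨ (src e = b ∧ tgt e = a)

/-- The spanning subgraph with edge set `S` is connected. -/
def ConnectedOn (src tgt : Fin m → Fin (n + 1)) (S : Finset (Fin m)) : Prop :=
  ∀ a b : Fin (n + 1), Relation.ReflTransGen (edgeAdj src tgt S) a b

/-- `F` is the edge set of a spanning tree of the graph on `n + 1` nodes
(a connected spanning subgraph with exactly `n` edges). -/
def IsSpanningTree (src tgt : Fin m → Fin (n + 1)) (F : Finset (Fin m)) : Prop :=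
  F.card = n ∧ ConnectedOn src tgt F

/-- Connectivity within the vertex set `V`, using only edges of `S` traversed inside `V`. -/
def ConnWithin (src tgt : Fin m → Fin (n + 1)) (S : Finset (Fin m))
    (V : Finset (Fin (n + 1))) : Prop :=
  ∀ a ∈ V, ∀ b ∈ V,
    Relation.ReflTransGen (fun x y => x ∈ V ∧ y ∈ V ∧ edgeAdj src tgt S x y) a b

/-- `F` is a spanning forest of exactly two vertex-disjoint trees, one containing all
nodes in `N1` and the other containing all nodes in `N2`. -/
def IsSpanningForest2 (src tgt : Fin m → Fin (n + 1)) (F : Finset (Fin m))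
    (N1 N2 : Finset (Fin (n + 1))) : Prop :=
  ∃ V1 V2 : Finset (Fin (n + 1)),
    Disjoint V1 V2 ∧ V1 ∪ V2 = Finset.univ ∧ V1.Nonempty ∧ V2.Nonempty ∧
      N1 ⊆ V1 ∧ N2 ⊆ V2 ∧ F.card + 1 = n ∧
      (∀ e ∈ F, (src e ∈ V1 ∧ tgt e ∈ V1) ∨ (src e ∈ V2 ∧ tgt e ∈ V2)) ∧
      ConnWithin src tgt F V1 ∧ ConnWithin src tgt F V2

/-- The (signed) incidence matrix `C`. -/
def incMat (src tgt : Fin m → Fin (n + 1)) : Matrix (Fin (n + 1)) (Fin m) ℝ :=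
  Matrix.of fun i e => if src e = i then 1 else if tgt e = i then -1 else 0

/-- The weighted Laplacian `L = C ⬝ diag B ⬝ Cᵀ`. -/
noncomputable def lap (src tgt : Fin m → Fin (n + 1)) (B : Fin m → ℝ) :
    Matrix (Fin (n + 1)) (Fin (n + 1)) ℝ :=
  incMat src tgt * Matrix.diagonal B * (incMat src tgt)ᵀ

/-- The reduced Laplacian: delete the row and column of the reference node `Fin.last n`. -/
noncomputable def rlap (src tgt : Fin m → Fin (n + 1)) (B : Fin m → ℝ) :
    Matrix (Fin n) (Fin n) ℝ :=
  (lap src tgt B).submatrix Fin.castSucc Fin.castSucc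

/-- The inverse of the reduced Laplacian, padded with a zero row and column at the
reference node. -/
noncomputable def Amat (src tgt : Fin m → Fin (n + 1)) (B : Fin m → ℝ) :
    Matrix (Fin (n + 1)) (Fin (n + 1)) ℝ :=
  Matrix.of fun i j =>
    if hi : i = Fin.last n then 0
    else if hj : j = Fin.last n then 0
    else (rlap src tgt B)⁻¹ (i.castPred hi) (j.castPred hj)

open Classical in
/-- `Σ_{F ∈ T_E} β(F)`: total weight of all spanning trees. -/
noncomputable def treeSum (src tgt : Fin m → Fin (n + 1)) (B : Fin m → ℝ) : ℝ :=
  ∑ F ∈ Finset.univ.filter (fun F => IsSpanningTree src tgt F), ∏ e ∈ F, B e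

open Classical in
/-- `Σ_{F ∈ T_{−l}} β(F)`: total weight of all spanning trees avoiding the edge `l`. -/
noncomputable def treeSumAvoiding (src tgt : Fin m → Fin (n + 1)) (B : Fin m → ℝ)
    (l : Fin m) : ℝ :=
  ∑ F ∈ Finset.univ.filter (fun F => IsSpanningTree src tgt F ∧ l ∉ F), ∏ e ∈ F, B e

open Classical in
/-- `Σ_{F ∈ T(N1, N2)} β(F)`: total weight of two-tree spanning forests separating
`N1` from `N2`. -/
noncomputable def forestSum (src tgt : Fin m → Fin (n + 1)) (B : Fin m → ℝ)
    (N1 N2 : Finset (Fin (n + 1))) : ℝ :=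
  ∑ F ∈ Finset.univ.filter (fun F => IsSpanningForest2 src tgt F N1 N2), ∏ e ∈ F, B e

/-- The power transfer distribution factor `D_{l, î ĵ}`. -/
noncomputable def ptdf (src tgt : Fin m → Fin (n + 1)) (B : Fin m → ℝ) (l : Fin m)
    (ihat jhat : Fin (n + 1)) : ℝ :=
  B l * (Amat src tgt B (src l) ihat + Amat src tgt B (tgt l) jhat
    - Amat src tgt B (src l) jhat - Amat src tgt B (tgt l) ihat)

/-- An edge is a bridge if its removal disconnects the graph. -/
def IsBridge (src tgt : Fin m → Fin (n + 1)) (l : Fin m) : Prop :=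
  ¬ ConnectedOn src tgt (Finset.univ.erase l)

/-- There is a simple cycle (distinct edges, distinct vertices) containing both edges
`l` and `lhat`. -/
def ExistsSimpleCycleThrough (src tgt : Fin m → Fin (n + 1)) (l lhat : Fin m) : Prop :=
  ∃ (k : ℕ) (es : Fin (k + 2) → Fin m) (vs : Fin (k + 2) → Fin (n + 1)),
    Function.Injective es ∧ Function.Injective vs ∧
      (∀ t, (src (es t) = vs t ∧ tgt (es t) = vs (t + 1)) ∨
        (src (es t) = vs (t + 1) ∧ tgt (es t) = vs t)) ∧
      (∃ t, es t = l) ∧ (∃ t, es t = lhat)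

/-- The incidence submatrix `C_{−F}` on the surviving edges. -/
def Cminus (src tgt : Fin m → Fin (n + 1)) (F : Finset (Fin m)) :
    Matrix (Fin (n + 1)) {e : Fin m // e ∉ F} ℝ :=
  (incMat src tgt).submatrix id (fun e => e.val)

/-- The incidence submatrix `C_F` on the removed edges. -/
def Cof (src tgt : Fin m → Fin (n + 1)) (F : Finset (Fin m)) :
    Matrix (Fin (n + 1)) {e : Fin m // e ∈ F} ℝ :=
  (incMat src tgt).submatrix id (fun e => e.val)

/-- The diagonal susceptance submatrix `B_{−F}` on the surviving edges. -/
noncomputable def Bminus (B : Fin m → ℝ) (F : Finset (Fin m)) :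
    Matrix {e : Fin m // e ∉ F} {e : Fin m // e ∉ F} ℝ :=
  Matrix.diagonal fun e => B e.val

/-- The diagonal susceptance submatrix `B_F` on the removed edges. -/
noncomputable def Bof (B : Fin m → ℝ) (F : Finset (Fin m)) :
    Matrix {e : Fin m // e ∈ F} {e : Fin m // e ∈ F} ℝ :=
  Matrix.diagonal fun e => B e.val

/-- The post-contingency Laplacian `L_{−F} = C_{−F} ⬝ B_{−F} ⬝ C_{−F}ᵀ`. -/
noncomputable def lapMinus (src tgt : Fin m → Fin (n + 1)) (B : Fin m → ℝ)
    (F : Finset (Fin m)) : Matrix (Fin (n + 1)) (Fin (n + 1)) ℝ :=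
  Cminus src tgt F * Bminus B F * (Cminus src tgt F)ᵀ

/-- The padded inverse `A_{−F}` of the post-contingency reduced Laplacian. -/
noncomputable def AmatMinus (src tgt : Fin m → Fin (n + 1)) (B : Fin m → ℝ)
    (F : Finset (Fin m)) : Matrix (Fin (n + 1)) (Fin (n + 1)) ℝ :=
  Matrix.of fun i j =>
    if hi : i = Fin.last n then 0
    else if hj : j = Fin.last n then 0
    else ((lapMinus src tgt B F).submatrix Fin.castSucc Fin.castSucc)⁻¹
      (i.castPred hi) (j.castPred hj)

/-- The pre-contingency branch flow vector `f = diag(B) ⬝ Cᵀ ⬝ A ⬝ p`. -/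
noncomputable def flowPre (src tgt : Fin m → Fin (n + 1)) (B : Fin m → ℝ)
    (p : Fin (n + 1) → ℝ) : Fin m → ℝ :=
  (Matrix.diagonal B * (incMat src tgt)ᵀ * Amat src tgt B) *ᵥ p

/-- The post-contingency branch flow vector `f̃_{−F} = B_{−F} ⬝ C_{−F}ᵀ ⬝ A_{−F} ⬝ p`
on the surviving edges. -/
noncomputable def flowPost (src tgt : Fin m → Fin (n + 1)) (B : Fin m → ℝ)
    (F : Finset (Fin m)) (p : Fin (n + 1) → ℝ) : {e : Fin m // e ∉ F} → ℝ :=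
  (Bminus B F * (Cminus src tgt F)ᵀ * AmatMinus src tgt B F) *ᵥ p

/-- The generalized line outage distribution factor matrix
`K^F = B_{−F} ⬝ C_{−F}ᵀ ⬝ A_{−F} ⬝ C_F`. -/
noncomputable def glodf (src tgt : Fin m → Fin (n + 1)) (B : Fin m → ℝ)
    (F : Finset (Fin m)) : Matrix {e : Fin m // e ∉ F} {e : Fin m // e ∈ F} ℝ :=
  Bminus B F * (Cminus src tgt F)ᵀ * AmatMinus src tgt B F * Cof src tgt F

/-- The PTDF submatrix `D_{FF} = B_F ⬝ C_Fᵀ ⬝ A ⬝ C_F`. -/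
noncomputable def Dff (src tgt : Fin m → Fin (n + 1)) (B : Fin m → ℝ)
    (F : Finset (Fin m)) : Matrix {e : Fin m // e ∈ F} {e : Fin m // e ∈ F} ℝ :=
  Bof B F * (Cof src tgt F)ᵀ * Amat src tgt B * Cof src tgt F

/-- The PTDF submatrix `D_{−FF} = B_{−F} ⬝ C_{−F}ᵀ ⬝ A ⬝ C_F`. -/
noncomputable def DmFF (src tgt : Fin m → Fin (n + 1)) (B : Fin m → ℝ)
    (F : Finset (Fin m)) : Matrix {e : Fin m // e ∉ F} {e : Fin m // e ∈ F} ℝ :=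
  Bminus B F * (Cminus src tgt F)ᵀ * Amat src tgt B * Cof src tgt F

section AuxGlodf

variable {n m : ℕ}

/-- Padding an `n × n` matrix with a zero last row and column. -/
noncomputable def padM (M : Matrix (Fin n) (Fin n) ℝ) :
    Matrix (Fin (n + 1)) (Fin (n + 1)) ℝ :=
  Matrix.of fun i j =>
    if hi : i = Fin.last n then 0
    else if hj : j = Fin.last n then 0
    else M (i.castPred hi) (j.castPred hj)

lemma padM_last_right (M : Matrix (Fin n) (Fin n) ℝ) (i : Fin (n + 1)) :
    padM M i (Fin.last n) = 0 := by
  simp only [padM, Matrix.of_apply]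
  split <;> simp

lemma padM_last_left (M : Matrix (Fin n) (Fin n) ℝ) (j : Fin (n + 1)) :
    padM M (Fin.last n) j = 0 := by
  simp [padM]

lemma padM_castSucc (M : Matrix (Fin n) (Fin n) ℝ) (i j : Fin n) :
    padM M i.castSucc j.castSucc = M i j := by
  simp only [padM, Matrix.of_apply]
  rw [dif_neg (Fin.castSucc_lt_last i).ne, dif_neg (Fin.castSucc_lt_last j).ne]
  simp

lemma mul_padM_mul {α β : Type*} (P : Matrix α (Fin (n + 1)) ℝ)
    (M : Matrix (Fin n) (Fin n) ℝ) (Q : Matrix (Fin (n + 1)) β ℝ) :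
    P * padM M * Q = P.submatrix id Fin.castSucc * M * Q.submatrix Fin.castSucc id := by
  ext a b
  simp only [Matrix.mul_apply, Matrix.submatrix_apply, id_eq, Fin.sum_univ_castSucc,
    padM_last_right, padM_last_left, padM_castSucc, mul_zero, zero_mul,
    Finset.sum_const_zero, add_zero, zero_add]

lemma triple_apply {ι α : Type*} [Fintype ι] [DecidableEq ι]
    (X : Matrix α ι ℝ) (d : ι → ℝ) (i j : α) :
    (X * Matrix.diagonal d * Xᵀ) i j = ∑ e, X i e * d e * X j e := by
  rw [Matrix.mul_apply]
  refine Finset.sum_congr rfl fun e _ => ?_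
  rw [Matrix.mul_diagonal, Matrix.transpose_apply]

/-- Reduced incidence matrix (last row deleted). -/
def CbM (src tgt : Fin m → Fin (n + 1)) : Matrix (Fin n) (Fin m) ℝ :=
  (incMat src tgt).submatrix Fin.castSucc id

lemma rlap_apply (src tgt : Fin m → Fin (n + 1)) (B : Fin m → ℝ) (i j : Fin n) :
    rlap src tgt B i j
      = ∑ e, incMat src tgt i.castSucc e * B e * incMat src tgt j.castSucc e := by
  have h := triple_apply (incMat src tgt) B i.castSucc j.castSucc
  simpa [rlap, lap] using h

lemma rlap_eq_prod (src tgt : Fin m → Fin (n + 1)) (B : Fin m → ℝ) :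
    rlap src tgt B = CbM src tgt * Matrix.diagonal B * (CbM src tgt)ᵀ := by
  ext i j
  rw [rlap_apply, triple_apply]
  rfl

lemma quad_form (src tgt : Fin m → Fin (n + 1)) (d : Fin m → ℝ) (v : Fin n → ℝ) :
    v ⬝ᵥ (rlap src tgt d *ᵥ v)
      = ∑ e, d e * ((CbM src tgt)ᵀ *ᵥ v) e * ((CbM src tgt)ᵀ *ᵥ v) e := by
  rw [rlap_eq_prod]
  rw [← Matrix.mulVec_mulVec, ← Matrix.mulVec_mulVec, Matrix.dotProduct_mulVec]
  rw [← Matrix.transpose_transpose (CbM src tgt), Matrix.vecMul_transpose,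
    Matrix.transpose_transpose]
  simp only [dotProduct, Matrix.mulVec_diagonal]
  exact Finset.sum_congr rfl fun e _ => by ring

lemma det_rlap_ne_zero (src tgt : Fin m → Fin (n + 1))
    (hsimple : ∀ e, src e ≠ tgt e) (d : Fin m → ℝ) (hd0 : ∀ e, 0 ≤ d e)
    (S : Finset (Fin m)) (hdS : ∀ e ∈ S, 0 < d e)
    (hconn : ConnectedOn src tgt S) : (rlap src tgt d).det ≠ 0 := by
  intro hdet
  obtain ⟨v, hv0, hvk⟩ := (Matrix.exists_mulVec_eq_zero_iff).mpr hdet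
  set w : Fin m → ℝ := (CbM src tgt)ᵀ *ᵥ v with hw
  have hq : ∑ e, d e * w e * w e = 0 := by
    rw [← quad_form src tgt d v, hvk, dotProduct_zero]
  have hterm : ∀ e ∈ (Finset.univ : Finset (Fin m)), 0 ≤ d e * w e * w e := fun e _ => by
    rw [mul_assoc]; exact mul_nonneg (hd0 e) (mul_self_nonneg _)
  have hzero : ∀ e ∈ S, w e = 0 := by
    intro e he
    have h := (Finset.sum_eq_zero_iff_of_nonneg hterm).mp hq e (Finset.mem_univ e)
    have hpos := hdS e he
    have h2 : d e * (w e * w e) = 0 := by rw [← mul_assoc]; exact h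
    exact mul_self_eq_zero.mp ((mul_eq_zero.mp h2).resolve_left hpos.ne')
  set x : Fin (n + 1) → ℝ := fun i => if h : i = Fin.last n then 0 else v (i.castPred h)
    with hx
  have hxc : ∀ i : Fin n, x i.castSucc = v i := fun i => by
    simp only [hx]
    rw [dif_neg (Fin.castSucc_lt_last i).ne]
    simp
  have hxl : x (Fin.last n) = 0 := by simp [hx]
  have hwe : ∀ e, w e = ∑ i : Fin (n + 1), incMat src tgt i e * x i := by
    intro e
    rw [Fin.sum_univ_castSucc, hxl, mul_zero, add_zero]
    simp only [hw, Matrix.mulVec, dotProduct, Matrix.transpose_apply, CbM,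
      Matrix.submatrix_apply, id_eq]
    exact Finset.sum_congr rfl fun i _ => by rw [hxc]
  have hsum : ∀ e, w e = x (src e) - x (tgt e) := by
    intro e
    rw [hwe e]
    have hterm' : ∀ i, incMat src tgt i e * x i
        = (if src e = i then x i else 0) - (if tgt e = i then x i else 0) := by
      intro i
      simp only [incMat, Matrix.of_apply]
      by_cases h1 : src e = i
      · have h2 : ¬ tgt e = i := fun h2 => hsimple e (h1.trans h2.symm)
        simp [h1, h2]
      · by_cases h2 : tgt e = i
        · simp [h1, h2]
        · simp [h1, h2]
    rw [Finset.sum_congr rfl fun i _ => hterm' i, Finset.sum_sub_distrib]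
    simp
  have hadj : ∀ a b, edgeAdj src tgt S a b → x a = x b := by
    rintro a b ⟨e, he, ⟨h1, h2⟩ | ⟨h1, h2⟩⟩
    · have h := hzero e he; rw [hsum e, h1, h2] at h; linarith
    · have h := hzero e he; rw [hsum e, h1, h2] at h; linarith
  have htrans : ∀ a b, Relation.ReflTransGen (edgeAdj src tgt S) a b → x a = x b := by
    intro a b h
    induction h with
    | refl => rfl
    | tail _ hbc ih => rw [ih, hadj _ _ hbc]
  have hall : ∀ a, x a = 0 := fun a => (htrans a _ (hconn a (Fin.last n))).trans hxl
  refine hv0 ?_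
  funext i
  have := hall i.castSucc
  rw [hxc] at this
  simpa using this

lemma lapMinus_eq (src tgt : Fin m → Fin (n + 1)) (B : Fin m → ℝ) (F : Finset (Fin m)) :
    lapMinus src tgt B F = lap src tgt (fun e => if e ∈ F then 0 else B e) := by
  classical
  ext i j
  have h1 : lapMinus src tgt B F i j
      = ∑ e : {e : Fin m // e ∉ F}, incMat src tgt i e.val
          * B e.val * incMat src tgt j e.val := by
    have := triple_apply (Cminus src tgt F) (fun e : {e : Fin m // e ∉ F} => B e.val) i j
    simpa [lapMinus, Bminus, Cminus] using this
  have h2 : lap src tgt (fun e => if e ∈ F then 0 else B e) i j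
      = ∑ e, incMat src tgt i e * (if e ∈ F then 0 else B e) * incMat src tgt j e :=
    triple_apply _ _ i j
  rw [h1, h2]
  rw [← Finset.sum_subtype (p := fun e => e ∉ F) (Finset.univ.filter (fun e => e ∉ F))
    (by simp) (fun e => incMat src tgt i e * B e * incMat src tgt j e)]
  rw [Finset.sum_filter]
  refine Finset.sum_congr rfl fun e _ => ?_
  by_cases h : e ∈ F <;> simp [h]

lemma rlap_split (src tgt : Fin m → Fin (n + 1)) (B : Fin m → ℝ) (F : Finset (Fin m)) :
    rlap src tgt B
      = rlap src tgt (fun e => if e ∈ F then 0 else B e)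
        + (incMat src tgt).submatrix Fin.castSucc (Subtype.val : {e : Fin m // e ∈ F} → _)
            * Bof B F
            * ((incMat src tgt).submatrix Fin.castSucc
                (Subtype.val : {e : Fin m // e ∈ F} → _))ᵀ := by
  classical
  simp only [Bof]
  ext i j
  rw [Matrix.add_apply, rlap_apply, rlap_apply, triple_apply]
  have hterm : ∀ e : Fin m,
      incMat src tgt i.castSucc e * B e * incMat src tgt j.castSucc e
        = incMat src tgt i.castSucc e * (if e ∈ F then 0 else B e)
            * incMat src tgt j.castSucc e
          + (if e ∈ F then incMat src tgt i.castSucc e * B e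
              * incMat src tgt j.castSucc e else 0) := by
    intro e
    by_cases h : e ∈ F <;> simp [h]
  rw [Finset.sum_congr rfl fun e _ => hterm e, Finset.sum_add_distrib]
  congr 1
  rw [← Finset.sum_filter]
  rw [Finset.sum_subtype (p := fun e => e ∈ F) (Finset.univ.filter (fun e => e ∈ F))
    (by simp) (fun e => incMat src tgt i.castSucc e * B e * incMat src tgt j.castSucc e)]
  rfl

lemma AmatMinus_eq_padM (src tgt : Fin m → Fin (n + 1)) (B : Fin m → ℝ)
    (F : Finset (Fin m)) :
    AmatMinus src tgt B F
      = padM (rlap src tgt (fun e => if e ∈ F then 0 else B e))⁻¹ := by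
  have h : (lapMinus src tgt B F).submatrix Fin.castSucc Fin.castSucc
      = rlap src tgt (fun e => if e ∈ F then 0 else B e) := by
    rw [lapMinus_eq]; rfl
  simp only [AmatMinus, padM, h]

lemma sandwich {α β γ : Type*} [Fintype α] (R : Matrix γ α ℝ)
    (P : Matrix α (Fin (n + 1)) ℝ) (M : Matrix (Fin n) (Fin n) ℝ)
    (Q : Matrix (Fin (n + 1)) β ℝ) :
    R * P * padM M * Q
      = R * (P.submatrix id Fin.castSucc * M * Q.submatrix Fin.castSucc id) := by
  rw [← mul_padM_mul]
  simp only [Matrix.mul_assoc]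

lemma Amat_eq_padM (src tgt : Fin m → Fin (n + 1)) (B : Fin m → ℝ) :
    Amat src tgt B = padM (rlap src tgt B)⁻¹ := rfl

end AuxGlodf

/-- **GLODF via pre-contingency network, Theorem 4 part 2.**
For a non-cut set `F`, the GLODF matrix computed from the post-contingency network equals
`D_{−FF} (I − D_{FF})⁻¹` computed from the pre-contingency network. -/
theorem glodf_pre_contingency
    (src tgt : Fin m → Fin (n + 1)) (B : Fin m → ℝ)
    (hB : ∀ e, 0 < B e)
    (hsimple : ∀ e, src e ≠ tgt e)
    (hconn : ConnectedOn src tgt Finset.univ)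
    (F : Finset (Fin m)) (hF : F ⊂ Finset.univ)
    (hnc : ConnectedOn src tgt (Finset.univ \ F)) :
    glodf src tgt B F = DmFF src tgt B F * (1 - Dff src tgt B F)⁻¹ := by
  classical
  set B' : Fin m → ℝ := fun e => if e ∈ F then 0 else B e with hB'
  set CF : Matrix (Fin n) {e : Fin m // e ∈ F} ℝ :=
    (incMat src tgt).submatrix Fin.castSucc Subtype.val with hCF
  set Cm : Matrix (Fin n) {e : Fin m // e ∉ F} ℝ :=
    (incMat src tgt).submatrix Fin.castSucc Subtype.val with hCm
  set M : Matrix (Fin n) (Fin n) ℝ := rlap src tgt B with hM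
  set Mm : Matrix (Fin n) (Fin n) ℝ := rlap src tgt B' with hMm
  have hMdet : IsUnit M.det :=
    isUnit_iff_ne_zero.mpr (det_rlap_ne_zero src tgt hsimple B (fun e => (hB e).le)
      Finset.univ (fun e _ => hB e) hconn)
  have hMmdet : IsUnit Mm.det := by
    refine isUnit_iff_ne_zero.mpr (det_rlap_ne_zero src tgt hsimple B'
      (fun e => ?_) (Finset.univ \ F) (fun e he => ?_) hnc)
    · by_cases h : e ∈ F <;> simp [hB', h, (hB e).le]
    · rcases Finset.mem_sdiff.mp he with ⟨-, h⟩
      simpa [hB', h] using hB e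
  have hsplit : Mm = M - CF * Bof B F * CFᵀ := by
    rw [hMm, hM, hCF, hB', rlap_split src tgt B F, add_sub_cancel_right]
  have hc1 : ((Cof src tgt F)ᵀ).submatrix id Fin.castSucc = CFᵀ := rfl
  have hc2 : (Cof src tgt F).submatrix Fin.castSucc id = CF := rfl
  have hc3 : ((Cminus src tgt F)ᵀ).submatrix id Fin.castSucc = Cmᵀ := rfl
  have hDff : Dff src tgt B F = Bof B F * (CFᵀ * M⁻¹ * CF) := by
    rw [Dff, Amat_eq_padM, sandwich, hc1, hc2, ← hM]
  have hglodf : glodf src tgt B F = Bminus B F * (Cmᵀ * Mm⁻¹ * CF) := by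
    rw [glodf, AmatMinus_eq_padM, sandwich, hc3, hc2, ← hB', ← hMm]
  have hDm : DmFF src tgt B F = Bminus B F * (Cmᵀ * M⁻¹ * CF) := by
    rw [DmFF, Amat_eq_padM, sandwich, hc3, hc2, ← hM]
  have e1 : M * (1 - M⁻¹ * (CF * Bof B F * CFᵀ)) = Mm := by
    rw [Matrix.mul_sub, Matrix.mul_one, Matrix.mul_nonsing_inv_cancel_left _ _ hMdet,
      hsplit]
  have e2 : (1 - M⁻¹ * (CF * Bof B F * CFᵀ)).det ≠ 0 := by
    intro h
    have hdm := Matrix.det_mul M (1 - M⁻¹ * (CF * Bof B F * CFᵀ))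
    rw [e1, h, mul_zero] at hdm
    exact isUnit_iff_ne_zero.mp hMmdet hdm
  have e3 : (1 - M⁻¹ * (CF * Bof B F * CFᵀ)).det = (1 - Dff src tgt B F).det := by
    rw [hDff]
    have h1 : (1 : Matrix (Fin n) (Fin n) ℝ) - M⁻¹ * (CF * Bof B F * CFᵀ)
        = 1 + -(M⁻¹ * (CF * Bof B F)) * CFᵀ := by
      rw [Matrix.neg_mul, ← sub_eq_add_neg]
      simp only [Matrix.mul_assoc]
    rw [h1, Matrix.det_one_add_mul_comm]
    have h2 : (1 : Matrix {e : Fin m // e ∈ F} {e : Fin m // e ∈ F} ℝ)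
          + CFᵀ * -(M⁻¹ * (CF * Bof B F))
        = 1 + -(CFᵀ * (M⁻¹ * CF)) * Bof B F := by
      simp only [Matrix.mul_neg, Matrix.neg_mul, Matrix.mul_assoc]
    rw [h2, Matrix.det_one_add_mul_comm]
    congr 1
    simp only [Matrix.mul_neg, Matrix.neg_mul, ← sub_eq_add_neg, Matrix.mul_assoc]
  have hDdet : IsUnit (1 - Dff src tgt B F).det := by
    refine isUnit_iff_ne_zero.mpr ?_
    rw [← e3]; exact e2
  have hc : Mm * (Mm⁻¹ * CF * (1 - Dff src tgt B F)) = Mm * (M⁻¹ * CF) := by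
    rw [Matrix.mul_assoc Mm⁻¹ CF, Matrix.mul_nonsing_inv_cancel_left _ _ hMmdet, hsplit,
      Matrix.sub_mul, Matrix.mul_nonsing_inv_cancel_left _ _ hMdet, hDff, Matrix.mul_sub,
      Matrix.mul_one]
    simp only [Matrix.mul_assoc]
  have hstep : Mm⁻¹ * CF * (1 - Dff src tgt B F) = M⁻¹ * CF := by
    have h4 := congrArg (fun X => Mm⁻¹ * X) hc
    rwa [Matrix.nonsing_inv_mul_cancel_left _ _ hMmdet,
      Matrix.nonsing_inv_mul_cancel_left _ _ hMmdet] at h4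
  have hkey : Mm⁻¹ * CF = M⁻¹ * CF * (1 - Dff src tgt B F)⁻¹ := by
    rw [← hstep, Matrix.mul_nonsing_inv_cancel_right _ _ hDdet]
  rw [hglodf, hDm, Matrix.mul_assoc Cmᵀ Mm⁻¹ CF, hkey]
  simp only [Matrix.mul_assoc]
end

section
/- Simple cycles and connecting forests: Let G be a connected graph and let l = (i, j) and ℓ̂ = (î, ĵ) be two distinct edges of G. Then there exists a simple cycle of G containing both l and ℓ̂ if and only if at least one of the forest families T({i, î}, {j, ĵ}) and T({i, ĵ}, {j, î}) is nonempty. -/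
/-!
A simple cycle through `l` and `ℓ̂` is a path closed by `l`. Deleting `l` and `ℓ̂` cuts it into
two vertex-disjoint paths, each containing one endpoint of `l` and one of `ℓ̂`; in a connected graph
these two trees grow, one crossing edge at a time, into a spanning forest of two trees. Conversely,
in such a forest join the endpoints of `l` and `ℓ̂` inside each tree by a path: the two paths
together with `l` and `ℓ̂` form a simple cycle.
-/

open Matrix Finset

variable {n m : ℕ}

def Joins (src tgt : Fin m → Fin (n + 1)) (e : Fin m) (a b : Fin (n + 1)) : Prop :=
  (src e = a ∧ tgt e = b) ∨ (src e = b ∧ tgt e = a)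

structure IsPath (src tgt : Fin m → Fin (n + 1)) (V : ℕ → Fin (n + 1)) (E : ℕ → Fin m)
    (p : ℕ) : Prop where
  joins : ∀ i < p, Joins src tgt (E i) (V i) (V (i + 1))
  injOn : Set.InjOn V (Set.Iic p)

structure IsTreeOn (src tgt : Fin m → Fin (n + 1)) (V : Finset (Fin (n + 1)))
    (F : Finset (Fin m)) : Prop where
  mem : ∀ e ∈ F, src e ∈ V ∧ tgt e ∈ V
  conn : ConnWithin src tgt F V
  card_add_one : F.card + 1 = V.card

section

variable {src tgt : Fin m → Fin (n + 1)}

theorem Joins.symm {e : Fin m} {a b : Fin (n + 1)} (h : Joins src tgt e a b) :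
    Joins src tgt e b a :=
  Or.symm h

theorem Joins.eq_or_eq {e : Fin m} {a b c d : Fin (n + 1)} (h : Joins src tgt e a b)
    (h' : Joins src tgt e c d) : (a = c ∧ b = d) ∨ (a = d ∧ b = c) := by
  unfold Joins at h h'
  grind

theorem ConnWithin.mono {F F' : Finset (Fin m)} {V : Finset (Fin (n + 1))}
    (hC : ConnWithin src tgt F V) (hF : F ⊆ F') : ConnWithin src tgt F' V :=
  fun a ha b hb => Relation.ReflTransGen.mono
    (fun _ _ ⟨hx, hy, e, he, hj⟩ => ⟨hx, hy, e, hF he, hj⟩) _ _ (hC a ha b hb)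

theorem ConnWithin.of_forall_reflTransGen {F : Finset (Fin m)} {V : Finset (Fin (n + 1))}
    {u : Fin (n + 1)}
    (h : ∀ a ∈ V, Relation.ReflTransGen (fun x y => x ∈ V ∧ y ∈ V ∧ edgeAdj src tgt F x y) a u) :
    ConnWithin src tgt F V := by
  have : Std.Symm (fun x y => x ∈ V ∧ y ∈ V ∧ edgeAdj src tgt F x y) :=
    ⟨fun _ _ ⟨hx, hy, e, he, hj⟩ => ⟨hy, hx, e, he, Or.symm hj⟩⟩
  exact fun a ha b hb => (h a ha).trans (Std.Symm.symm _ _ (h b hb))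

namespace IsPath

variable {V : ℕ → Fin (n + 1)} {E : ℕ → Fin m} {p : ℕ}

theorem injOn_edges (hP : IsPath src tgt V E p) : Set.InjOn E (Set.Iio p) := by
  have key : ∀ i j, i < j → j < p → E i ≠ E j := by
    intro i j hij hj heq
    have hi : i < p := hij.trans hj
    rcases (hP.joins i hi).eq_or_eq (heq ▸ hP.joins j hj) with ⟨h, -⟩ | ⟨h, -⟩
    · have := hP.injOn (Set.mem_Iic.2 hi.le) (Set.mem_Iic.2 hj.le) h
      omega
    · have := hP.injOn (Set.mem_Iic.2 hi.le) (Set.mem_Iic.2 hj) h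
      omega
  intro i hi j hj heq
  rcases lt_trichotomy i j with h | h | h
  · exact absurd heq (key i j h hj)
  · exact h
  · exact absurd heq.symm (key j i h hi)

theorem eq_zero_and_eq_one_of_joins (hP : IsPath src tgt V E p) {i : ℕ} (hi : i < p)
    (hE : Joins src tgt (E i) (V p) (V 0)) : i = 0 ∧ p = 1 := by
  rcases (hP.joins i hi).eq_or_eq hE with ⟨h, -⟩ | ⟨h₀, h₁⟩
  · have := hP.injOn (Set.mem_Iic.2 hi.le) (Set.mem_Iic.2 le_rfl) h
    omega
  · have := hP.injOn (Set.mem_Iic.2 hi.le) (Set.mem_Iic.2 (Nat.zero_le p)) h₀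
    have := hP.injOn (Set.mem_Iic.2 hi) (Set.mem_Iic.2 le_rfl) h₁
    omega

theorem take (hP : IsPath src tgt V E p) {q : ℕ} (hq : q ≤ p) : IsPath src tgt V E q :=
  ⟨fun i hi => hP.joins i (by omega), hP.injOn.mono (Set.Iic_subset_Iic.2 hq)⟩

theorem drop (hP : IsPath src tgt V E p) {q : ℕ} (hq : q ≤ p) :
    IsPath src tgt (fun i => V (q + i)) (fun i => E (q + i)) (p - q) := by
  refine ⟨fun i hi => hP.joins (q + i) (by omega), fun i hi j hj h => ?_⟩
  have := hP.injOn (Set.mem_Iic.2 (by simp at hi; omega)) (Set.mem_Iic.2 (by simp at hj; omega)) h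
  omega

theorem append {V' : ℕ → Fin (n + 1)} {E' : ℕ → Fin m} {p' : ℕ} {e : Fin m}
    (hP : IsPath src tgt V E p) (hP' : IsPath src tgt V' E' p')
    (he : Joins src tgt e (V p) (V' 0)) (hdisj : ∀ i ≤ p, ∀ j ≤ p', V i ≠ V' j) :
    IsPath src tgt (fun i => if i ≤ p then V i else V' (i - (p + 1)))
      (fun i => if i < p then E i else if i = p then e else E' (i - (p + 1))) (p + p' + 1) := by
  refine ⟨fun i hi => ?_, fun i hi j hj h => ?_⟩
  · rcases lt_trichotomy i p with h | rfl | h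
    · simpa [h, h.le, Nat.succ_le_of_lt h] using hP.joins i h
    · simpa using he
    · have hP'i := hP'.joins (i - (p + 1)) (by omega)
      rw [show i - (p + 1) + 1 = i + 1 - (p + 1) by omega] at hP'i
      simpa [h.not_gt, h.ne', show ¬ i ≤ p by omega, show ¬ i + 1 ≤ p by omega] using hP'i
  · simp only [Set.mem_Iic] at hi hj
    split_ifs at h with hip hjp hjp
    · exact hP.injOn (Set.mem_Iic.2 hip) (Set.mem_Iic.2 hjp) h
    · exact absurd h (hdisj i hip _ (by omega))
    · exact absurd h.symm (hdisj j hjp _ (by omega))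
    · have := hP'.injOn (Set.mem_Iic.2 (by omega)) (Set.mem_Iic.2 (by omega)) h
      omega

theorem isTreeOn (hP : IsPath src tgt V E p) :
    IsTreeOn src tgt ((range (p + 1)).image V) ((range p).image E) := by
  have hV : ∀ i ≤ p, V i ∈ (range (p + 1)).image V :=
    fun i hi => mem_image_of_mem V (mem_range.2 (by omega))
  refine ⟨?_, ConnWithin.of_forall_reflTransGen (u := V 0) ?_, ?_⟩
  · intro e he
    obtain ⟨i, hi, rfl⟩ := mem_image.1 he
    rw [mem_range] at hi
    rcases hP.joins i hi with ⟨h₁, h₂⟩ | ⟨h₁, h₂⟩ <;> rw [h₁, h₂] <;>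
      exact ⟨hV _ (by omega), hV _ (by omega)⟩
  · intro a ha
    obtain ⟨i, hi, rfl⟩ := mem_image.1 ha
    rw [mem_range] at hi
    clear ha
    induction i with
    | zero => exact .refl
    | succ i ih =>
      refine .head ⟨hV _ (by omega), hV _ (by omega), E i,
        mem_image_of_mem E (mem_range.2 (by omega)), (hP.joins i (by omega)).symm⟩ (ih (by omega))
  · rw [card_image_of_injOn, card_image_of_injOn, card_range, card_range]
    · exact hP.injOn.mono fun i hi => by simp at hi ⊢; omega
    · exact hP.injOn_edges.mono fun i hi => by simpa using hi

end IsPath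

theorem ConnWithin.exists_isPath [Nonempty (Fin m)] {F : Finset (Fin m)}
    {A : Finset (Fin (n + 1))} (hC : ConnWithin src tgt F A) {a b : Fin (n + 1)} (ha : a ∈ A)
    (hb : b ∈ A) : ∃ p V E, IsPath src tgt V E p ∧ V 0 = a ∧ V p = b ∧ ∀ i ≤ p, V i ∈ A := by
  let G := SimpleGraph.fromRel fun x y => x ∈ A ∧ y ∈ A ∧ edgeAdj src tgt F x y
  have hadj : ∀ {x y}, G.Adj x y → x ∈ A ∧ ∃ e, Joins src tgt e x y := by
    rintro x y ⟨-, ⟨hx, -, e, -, he⟩ | ⟨-, hx, e, -, he⟩⟩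
    exacts [⟨hx, e, he⟩, ⟨hx, e, Or.symm he⟩]
  have hreach : G.Reachable a b := by
    rw [SimpleGraph.reachable_iff_reflTransGen]
    refine Relation.ReflTransGen.lift' id (fun x y hxy => ?_) _ _ (hC a ha b hb)
    by_cases h : x = y
    · exact h ▸ .refl
    · exact .single ⟨h, Or.inl hxy⟩
  classical
  let w := hreach.some.bypass
  choose! E hE using fun i (hi : i < w.length) => (hadj (w.adj_getVert_succ hi)).2
  refine ⟨w.length, w.getVert, E, ⟨hE, hreach.some.bypass_isPath.getVert_injOn⟩,
    w.getVert_zero, w.getVert_length, fun i hi => ?_⟩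
  rcases hi.lt_or_eq with hi | rfl
  · exact (hadj (w.adj_getVert_succ hi)).1
  · exact w.getVert_length.symm ▸ hb

theorem IsTreeOn.nonempty {V : Finset (Fin (n + 1))} {F : Finset (Fin m)}
    (hT : IsTreeOn src tgt V F) : V.Nonempty :=
  card_pos.1 (by have := hT.card_add_one; omega)

theorem IsTreeOn.insert {V : Finset (Fin (n + 1))} {F : Finset (Fin m)} {u v : Fin (n + 1)}
    {e : Fin m} (hT : IsTreeOn src tgt V F) (hu : u ∈ V) (hv : v ∉ V)
    (he : Joins src tgt e u v) : IsTreeOn src tgt (insert v V) (insert e F) := by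
  have heF : e ∉ F := fun h => by
    rcases he with ⟨-, h₂⟩ | ⟨h₁, -⟩
    · exact hv (h₂ ▸ (hT.mem e h).2)
    · exact hv (h₁ ▸ (hT.mem e h).1)
  refine ⟨?_, ConnWithin.of_forall_reflTransGen (u := u) ?_, ?_⟩
  · intro f hf
    rcases mem_insert.1 hf with rfl | hf
    · rcases he with ⟨h₁, h₂⟩ | ⟨h₁, h₂⟩ <;> simp [h₁, h₂, hu]
    · exact ⟨mem_insert_of_mem (hT.mem f hf).1, mem_insert_of_mem (hT.mem f hf).2⟩
  · intro a ha
    rcases mem_insert.1 ha with rfl | ha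
    · exact .single ⟨mem_insert_self _ _, mem_insert_of_mem hu, e, mem_insert_self _ _, he.symm⟩
    · exact Relation.ReflTransGen.mono (fun x y ⟨hx, hy, f, hf, hj⟩ =>
        ⟨mem_insert_of_mem hx, mem_insert_of_mem hy, f, mem_insert_of_mem hf, hj⟩) _ _
        (hT.conn a ha u hu)
  · rw [card_insert_of_notMem heF, card_insert_of_notMem hv, hT.card_add_one]

theorem IsTreeOn.isSpanningForest2_union {V₁ V₂ N₁ N₂ : Finset (Fin (n + 1))}
    {F₁ F₂ : Finset (Fin m)} (hT₁ : IsTreeOn src tgt V₁ F₁) (hT₂ : IsTreeOn src tgt V₂ F₂)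
    (hd : Disjoint V₁ V₂) (hu : V₁ ∪ V₂ = univ) (hN₁ : N₁ ⊆ V₁) (hN₂ : N₂ ⊆ V₂) :
    IsSpanningForest2 src tgt (F₁ ∪ F₂) N₁ N₂ := by
  have hF : Disjoint F₁ F₂ := disjoint_left.2 fun e h₁ h₂ =>
    disjoint_left.1 hd (hT₁.mem e h₁).1 (hT₂.mem e h₂).1
  have hcard : V₁.card + V₂.card = n + 1 := by
    rw [← card_union_of_disjoint hd, hu, card_univ, Fintype.card_fin]
  refine ⟨V₁, V₂, hd, hu, hT₁.nonempty, hT₂.nonempty, hN₁, hN₂, ?_, ?_,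
    hT₁.conn.mono subset_union_left, hT₂.conn.mono subset_union_right⟩
  · have := hT₁.card_add_one
    have := hT₂.card_add_one
    rw [card_union_of_disjoint hF]
    omega
  · intro e he
    rcases mem_union.1 he with h | h
    exacts [Or.inl (hT₁.mem e h), Or.inr (hT₂.mem e h)]

theorem ConnectedOn.exists_joins_of_mem_of_notMem (hconn : ConnectedOn src tgt univ)
    {S : Finset (Fin (n + 1))} {a b : Fin (n + 1)} (ha : a ∈ S) (hb : b ∉ S) :
    ∃ e u v, u ∈ S ∧ v ∉ S ∧ Joins src tgt e u v := by
  by_contra! h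
  have hclosed : ∀ y, Relation.ReflTransGen (edgeAdj src tgt univ) a y → y ∈ S := by
    intro y hy
    induction hy with
    | refl => exact ha
    | tail _ hxy ih =>
      obtain ⟨e, -, he⟩ := hxy
      by_contra hy
      exact h e _ _ ih hy he
  exact hb (hclosed b (hconn a b))

theorem ConnectedOn.exists_isTreeOn_partition (hconn : ConnectedOn src tgt univ)
    {V₁ V₂ : Finset (Fin (n + 1))} {F₁ F₂ : Finset (Fin m)} (hT₁ : IsTreeOn src tgt V₁ F₁)
    (hT₂ : IsTreeOn src tgt V₂ F₂) (hd : Disjoint V₁ V₂) :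
    ∃ W₁ W₂ G₁ G₂, V₁ ⊆ W₁ ∧ V₂ ⊆ W₂ ∧ Disjoint W₁ W₂ ∧ W₁ ∪ W₂ = univ ∧
      IsTreeOn src tgt W₁ G₁ ∧ IsTreeOn src tgt W₂ G₂ := by
  induction hk : (V₁ ∪ V₂)ᶜ.card generalizing V₁ V₂ F₁ F₂ with
  | zero => exact ⟨V₁, V₂, F₁, F₂, subset_rfl, subset_rfl, hd,
    (compl_eq_empty_iff _).1 (card_eq_zero.1 hk), hT₁, hT₂⟩
  | succ k ih =>
    obtain ⟨b, hb⟩ := card_pos.1 (by omega : 0 < (V₁ ∪ V₂)ᶜ.card)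
    obtain ⟨a, ha⟩ := hT₁.nonempty
    obtain ⟨e, u, v, hu, hv, he⟩ :=
      hconn.exists_joins_of_mem_of_notMem (mem_union_left _ ha) (mem_compl.1 hb)
    have hk' : (insert v (V₁ ∪ V₂))ᶜ.card = k := by
      rw [compl_insert, card_erase_of_mem (mem_compl.2 hv), hk, Nat.add_sub_cancel]
    rw [mem_union, not_or] at hv
    rcases mem_union.1 hu with hu | hu
    · obtain ⟨W₁, W₂, G₁, G₂, h₁, h₂, hW⟩ := ih (hT₁.insert hu hv.1 he) hT₂
        (disjoint_insert_left.2 ⟨hv.2, hd⟩) (by rwa [insert_union])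
      exact ⟨W₁, W₂, G₁, G₂, (subset_insert _ _).trans h₁, h₂, hW⟩
    · obtain ⟨W₁, W₂, G₁, G₂, h₁, h₂, hW⟩ := ih hT₁ (hT₂.insert hu hv.2 he)
        (disjoint_insert_right.2 ⟨hv.1, hd⟩) (by rwa [union_insert])
      exact ⟨W₁, W₂, G₁, G₂, h₁, (subset_insert _ _).trans h₂, hW⟩

theorem ConnectedOn.exists_isSpanningForest2 (hconn : ConnectedOn src tgt univ)
    {V₁ V₂ N₁ N₂ : Finset (Fin (n + 1))} {F₁ F₂ : Finset (Fin m)}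
    (hT₁ : IsTreeOn src tgt V₁ F₁) (hT₂ : IsTreeOn src tgt V₂ F₂) (hd : Disjoint V₁ V₂)
    (hN₁ : N₁ ⊆ V₁) (hN₂ : N₂ ⊆ V₂) : ∃ F, IsSpanningForest2 src tgt F N₁ N₂ := by
  obtain ⟨W₁, W₂, G₁, G₂, h₁, h₂, hd', hu, hT₁', hT₂'⟩ := hconn.exists_isTreeOn_partition hT₁ hT₂ hd
  exact ⟨_, hT₁'.isSpanningForest2_union hT₂' hd' hu (hN₁.trans h₁) (hN₂.trans h₂)⟩

open Fin.NatCast in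
theorem ExistsSimpleCycleThrough.exists_isPath_joins {l lhat : Fin m} (hne : l ≠ lhat)
    (h : ExistsSimpleCycleThrough src tgt l lhat) : ∃ k V E, IsPath src tgt V E (k + 1) ∧
      Joins src tgt l (V (k + 1)) (V 0) ∧ ∃ s < k + 1, E s = lhat := by
  obtain ⟨k, es, vs, -, hvs, hstep, ⟨t₀, rfl⟩, ⟨t₁, rfl⟩⟩ := h
  -- rotate the cycle so that it ends with the edge `es t₀`
  let c : ℕ → Fin (k + 2) := fun i => t₀ + ((i + 1 : ℕ) : Fin (k + 2))
  have hc_succ : ∀ i, c (i + 1) = c i + 1 := fun i => by simp [c, add_assoc]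
  have hc_inj : Set.InjOn c (Set.Iio (k + 2)) := fun i hi j hj h => by
    simp only [c, Nat.cast_succ, add_left_cancel_iff, add_right_cancel_iff] at h
    simpa [Fin.val_natCast, Nat.mod_eq_of_lt hi, Nat.mod_eq_of_lt hj] using congrArg Fin.val h
  have hc_zero : c 0 = t₀ + 1 := by simp [c]
  have hc_last : c (k + 1) = t₀ := by
    simp only [c, Fin.natCast_self, add_zero]
  have hc_s : c (t₁ - t₀ - 1).val = t₁ := by simp [c]
  have hjoins : ∀ i, Joins src tgt (es (c i)) (vs (c i)) (vs (c (i + 1))) :=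
    fun i => hc_succ i ▸ hstep (c i)
  refine ⟨k, vs ∘ c, es ∘ c, ⟨fun i _ => hjoins i, hvs.comp_injOn (hc_inj.mono ?_)⟩, ?_,
    (t₁ - t₀ - 1).val, ?_, by simp [hc_s]⟩
  · exact fun i hi => Nat.lt_succ_of_le hi
  · rw [Function.comp_apply, Function.comp_apply, hc_last, hc_zero]
    exact hstep t₀
  · refine lt_of_le_of_ne (Nat.le_of_lt_succ (t₁ - t₀ - 1).isLt) fun h => hne ?_
    rw [← hc_s, h, hc_last]

theorem existsSimpleCycleThrough_of_isPath {V : ℕ → Fin (n + 1)} {E : ℕ → Fin m} {k s : ℕ}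
    {l : Fin m} (hP : IsPath src tgt V E (k + 1)) (hl : Joins src tgt l (V (k + 1)) (V 0))
    (hs : s < k + 1) (hne : l ≠ E s) : ExistsSimpleCycleThrough src tgt l (E s) := by
  have hl_ne : ∀ i < k + 1, E i ≠ l := fun i hi h => by
    obtain ⟨rfl, hk⟩ := hP.eq_zero_and_eq_one_of_joins hi (h ▸ hl)
    obtain rfl : s = 0 := by omega
    exact hne h.symm
  refine ⟨k, Fin.lastCases l fun i => E i, fun t => V t, ?_, ?_, ?_,
    ⟨Fin.last _, Fin.lastCases_last⟩, ⟨Fin.castSucc ⟨s, hs⟩, Fin.lastCases_castSucc _⟩⟩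
  · intro t t' h
    induction t using Fin.lastCases <;> induction t' using Fin.lastCases <;>
      simp only [Fin.lastCases_last, Fin.lastCases_castSucc] at h
    · rfl
    · exact absurd h.symm (hl_ne _ (Fin.is_lt _))
    · exact absurd h (hl_ne _ (Fin.is_lt _))
    · exact congrArg _ (Fin.ext (hP.injOn_edges (Fin.is_lt _) (Fin.is_lt _) h))
  · exact fun t t' h =>
      Fin.ext (hP.injOn (Nat.le_of_lt_succ t.isLt) (Nat.le_of_lt_succ t'.isLt) h)
  · intro t
    induction t using Fin.lastCases with
    | last => simpa [Joins, Fin.last_add_one] using hl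
    | cast i => simpa [Joins, Fin.coeSucc_eq_succ] using hP.joins i i.isLt

theorem IsPath.exists_isSpanningForest2 (hconn : ConnectedOn src tgt univ)
    {V : ℕ → Fin (n + 1)} {E : ℕ → Fin m} {k s : ℕ} {l : Fin m}
    (hP : IsPath src tgt V E (k + 1)) (hl : Joins src tgt l (V (k + 1)) (V 0)) (hs : s < k + 1) :
    (∃ F, IsSpanningForest2 src tgt F {src l, src (E s)} {tgt l, tgt (E s)}) ∨
      (∃ F, IsSpanningForest2 src tgt F {src l, tgt (E s)} {tgt l, src (E s)}) := by
  -- the two arcs left after deleting `l` and `E s` from the cycle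
  have hA := (hP.take hs.le).isTreeOn
  have hB := (hP.drop (Nat.succ_le_of_lt hs)).isTreeOn
  set A := (range (s + 1)).image V
  set B := (range (k + 1 - (s + 1) + 1)).image fun i => V (s + 1 + i)
  have hAB : Disjoint A B := by
    simp only [A, B, disjoint_left, mem_image, mem_range, not_exists, not_and]
    rintro _ ⟨i, hi, rfl⟩ j hj h
    have := hP.injOn (Set.mem_Iic.2 (by omega)) (Set.mem_Iic.2 (by omega)) h.symm
    omega
  have hA' : {V 0, V s} ⊆ A :=
    insert_subset (mem_image.2 ⟨0, by simp, rfl⟩)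
      (singleton_subset_iff.2 (mem_image.2 ⟨s, by simp, rfl⟩))
  have hB' : {V (k + 1), V (s + 1)} ⊆ B :=
    insert_subset (mem_image.2 ⟨k - s, mem_range.2 (by omega), congrArg V (by omega)⟩)
      (singleton_subset_iff.2 (mem_image.2 ⟨0, by simp, rfl⟩))
  rcases hl with ⟨h₁, h₂⟩ | ⟨h₁, h₂⟩ <;> rcases hP.joins s hs with ⟨h₃, h₄⟩ | ⟨h₃, h₄⟩ <;>
    rw [h₁, h₂, h₃, h₄]
  · exact .inr (hconn.exists_isSpanningForest2 hB hA hAB.symm hB' hA')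
  · exact .inl (hconn.exists_isSpanningForest2 hB hA hAB.symm hB' hA')
  · exact .inl (hconn.exists_isSpanningForest2 hA hB hAB hA' hB')
  · exact .inr (hconn.exists_isSpanningForest2 hA hB hAB hA' hB')

theorem IsSpanningForest2.existsSimpleCycleThrough {F : Finset (Fin m)}
    {N₁ N₂ : Finset (Fin (n + 1))} (hF : IsSpanningForest2 src tgt F N₁ N₂) {l lhat : Fin m}
    (hne : l ≠ lhat) {a b c d : Fin (n + 1)} (hl : Joins src tgt l a b)
    (hlhat : Joins src tgt lhat c d) (ha : a ∈ N₁) (hc : c ∈ N₁) (hb : b ∈ N₂) (hd : d ∈ N₂) :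
    ExistsSimpleCycleThrough src tgt l lhat := by
  have : Nonempty (Fin m) := ⟨l⟩
  obtain ⟨V₁, V₂, hV, -, -, -, hN₁, hN₂, -, -, hC₁, hC₂⟩ := hF
  obtain ⟨p₁, P₁, E₁, hP₁, hP₁_zero, hP₁_last, hP₁_mem⟩ := hC₁.exists_isPath (hN₁ ha) (hN₁ hc)
  obtain ⟨p₂, P₂, E₂, hP₂, hP₂_zero, hP₂_last, hP₂_mem⟩ := hC₂.exists_isPath (hN₂ hd) (hN₂ hb)
  have hP := hP₁.append hP₂ (e := lhat) (by rwa [hP₁_last, hP₂_zero])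
    fun i hi j hj h => disjoint_left.1 hV (hP₁_mem i hi) (h ▸ hP₂_mem j hj)
  simpa using existsSimpleCycleThrough_of_isPath (s := p₁) hP
    (by simpa [hP₁_zero, hP₂_last, show p₁ + p₂ + 1 - (p₁ + 1) = p₂ by omega] using hl.symm)
    (by omega) (by simpa using hne)

end

theorem simple_cycle_iff_connecting_forest_general
    (src tgt : Fin m → Fin (n + 1))
    (hconn : ConnectedOn src tgt Finset.univ)
    (l lhat : Fin m) (hne : l ≠ lhat) :
    ExistsSimpleCycleThrough src tgt l lhat ↔
      ((∃ F, IsSpanningForest2 src tgt F {src l, src lhat} {tgt l, tgt lhat})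
        ∨ (∃ F, IsSpanningForest2 src tgt F {src l, tgt lhat} {tgt l, src lhat})) := by
  constructor
  · intro h
    obtain ⟨k, V, E, hP, hl, s, hs, rfl⟩ := h.exists_isPath_joins hne
    exact hP.exists_isSpanningForest2 hconn hl hs
  · rintro (⟨F, hF⟩ | ⟨F, hF⟩)
    · exact hF.existsSimpleCycleThrough hne (.inl ⟨rfl, rfl⟩) (.inl ⟨rfl, rfl⟩)
        (by simp) (by simp) (by simp) (by simp)
    · exact hF.existsSimpleCycleThrough hne (.inl ⟨rfl, rfl⟩) (.inr ⟨rfl, rfl⟩)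
        (by simp) (by simp) (by simp) (by simp)

/-- **Simple cycles and connecting forests.**
For distinct edges `l = (i, j)` and `ℓ̂ = (î, ĵ)` of a connected graph, there is a simple
cycle containing both edges if and only if at least one of the two-tree spanning forest
families `T({i,î},{j,ĵ})`, `T({i,ĵ},{j,î})` is nonempty. -/
theorem simple_cycle_iff_connecting_forest
    (src tgt : Fin m → Fin (n + 1))
    (hsimple : ∀ e, src e ≠ tgt e)
    (hconn : ConnectedOn src tgt Finset.univ)
    (l lhat : Fin m) (hne : l ≠ lhat) :
    ExistsSimpleCycleThrough src tgt l lhat ↔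
      ((∃ F, IsSpanningForest2 src tgt F {src l, src lhat} {tgt l, tgt lhat})
        ∨ (∃ F, IsSpanningForest2 src tgt F {src l, tgt lhat} {tgt l, src lhat})) :=
  simple_cycle_iff_connecting_forest_general src tgt hconn l lhat hne
end

section
/- Simple Cycle Criterion, necessity (Theorem 5, 'only if' direction): Let ℓ̂ = (î, ĵ) be a non-bridge edge of the connected graph G and let l = (i, j) ≠ ℓ̂ be any other edge. If the line outage distribution factor K_{lℓ̂} := D_{lℓ̂} / (1 − D_{ℓ̂ℓ̂}) is nonzero, then there exists a simple cycle in G that contains both l and ℓ̂. -/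
open Matrix Finset

variable {n m : ℕ}

section Aux
variable (src tgt : Fin m → Fin (n + 1)) (B : Fin m → ℝ)

lemma scc_sum_inc (hs : ∀ e, src e ≠ tgt e) (θ : Fin (n+1) → ℝ) (e : Fin m) :
    ∑ v, incMat src tgt v e * θ v = θ (src e) - θ (tgt e) := by
  have : ∀ v, incMat src tgt v e * θ v
      = (if v = src e then θ v else 0) + (if v = tgt e then -θ v else 0) := by
    intro v
    by_cases h1 : v = src e <;> by_cases h2 : v = tgt e
    · exact absurd (h1 ▸ h2) (hs e)
    · subst h1; simp [incMat]; exact fun h => absurd h (hs e)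
    · subst h2; simp [incMat, (hs e)]; exact fun h => absurd h (fun h' => hs e h'.symm)
    · simp [incMat, Ne.symm h1, Ne.symm h2, h1, h2]
  rw [Finset.sum_congr rfl (fun v _ => this v), Finset.sum_add_distrib,
    Finset.sum_ite_eq' univ (src e) θ, Finset.sum_ite_eq' univ (tgt e) (fun v => -θ v)]
  simp [sub_eq_add_neg]

lemma scc_lap_mulVec (hs : ∀ e, src e ≠ tgt e) (θ : Fin (n+1) → ℝ) (x : Fin (n+1)) :
    (lap src tgt B *ᵥ θ) x
      = ∑ e, incMat src tgt x e * (B e * (θ (src e) - θ (tgt e))) := by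
  rw [lap, ← Matrix.mulVec_mulVec, ← Matrix.mulVec_mulVec]
  rw [Matrix.mulVec]
  refine Finset.sum_congr rfl fun e _ => ?_
  rw [Matrix.mulVec_diagonal]
  congr 2
  rw [Matrix.mulVec, ← scc_sum_inc src tgt hs θ e]
  exact Finset.sum_congr rfl fun v _ => by
    show (incMat src tgt)ᵀ e v * θ v = _
    rw [Matrix.transpose_apply]

end Aux

/-- Pad a vector on `Fin n` with a zero at the last coordinate. -/
def scc_pad (x : Fin n → ℝ) : Fin (n+1) → ℝ :=
  fun w => if h : w = Fin.last n then 0 else x (w.castPred h)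

section Aux2
variable (src tgt : Fin m → Fin (n + 1)) (B : Fin m → ℝ)

lemma scc_pad_castSucc (x : Fin n → ℝ) (i : Fin n) :
    scc_pad x (Fin.castSucc i) = x i := by
  simp [scc_pad, (Fin.castSucc_lt_last i).ne]

lemma scc_rlap_pad (x : Fin n → ℝ) (v : Fin n) :
    (lap src tgt B *ᵥ scc_pad x) (Fin.castSucc v) = (rlap src tgt B *ᵥ x) v := by
  simp only [Matrix.mulVec, dotProduct]
  rw [Fin.sum_univ_castSucc (f := fun w => lap src tgt B (Fin.castSucc v) w * scc_pad x w)]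
  have hl : scc_pad x (Fin.last n) = 0 := by simp [scc_pad]
  rw [hl, mul_zero, add_zero]
  simp only [rlap, Matrix.submatrix_apply]
  exact Finset.sum_congr rfl fun i _ => by rw [scc_pad_castSucc]

lemma scc_rlap_ker (hB : ∀ e, 0 < B e) (hs : ∀ e, src e ≠ tgt e)
    (hconn : ConnectedOn src tgt Finset.univ)
    (x : Fin n → ℝ) (hx : rlap src tgt B *ᵥ x = 0) : x = 0 := by
  set θ := scc_pad x with hθ
  have hlast : θ (Fin.last n) = 0 := by simp [hθ, scc_pad]
  -- energy is zero
  have hzero : ∑ e, B e * (θ (src e) - θ (tgt e))^2 = 0 := by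
    have h1 : θ ⬝ᵥ (lap src tgt B *ᵥ θ) = 0 := by
      rw [dotProduct, Fin.sum_univ_castSucc]
      rw [hlast]
      have : ∀ i : Fin n, θ (Fin.castSucc i) * (lap src tgt B *ᵥ θ) (Fin.castSucc i) = 0 := by
        intro i
        rw [scc_rlap_pad, hx]
        simp
      simp [this]
    have h2 : θ ⬝ᵥ (lap src tgt B *ᵥ θ) = ∑ e, B e * (θ (src e) - θ (tgt e))^2 := by
      rw [dotProduct]
      have : ∀ w, θ w * (lap src tgt B *ᵥ θ) w
          = ∑ e, θ w * (incMat src tgt w e * (B e * (θ (src e) - θ (tgt e)))) := by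
        intro w
        rw [scc_lap_mulVec src tgt B hs, Finset.mul_sum]
      rw [Finset.sum_congr rfl (fun w _ => this w), Finset.sum_comm]
      refine Finset.sum_congr rfl fun e _ => ?_
      have : ∑ w, θ w * (incMat src tgt w e * (B e * (θ (src e) - θ (tgt e))))
          = (∑ w, incMat src tgt w e * θ w) * (B e * (θ (src e) - θ (tgt e))) := by
        rw [Finset.sum_mul]
        exact Finset.sum_congr rfl fun w _ => by ring
      rw [this, scc_sum_inc src tgt hs]
      ring
    rw [← h2, h1]
  -- each edge has equal potentials
  have hedge : ∀ e, θ (src e) = θ (tgt e) := by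
    intro e
    have hnn : ∀ e ∈ (univ : Finset (Fin m)), 0 ≤ B e * (θ (src e) - θ (tgt e))^2 :=
      fun e _ => mul_nonneg (hB e).le (sq_nonneg _)
    have := (Finset.sum_eq_zero_iff_of_nonneg hnn).1 hzero e (mem_univ e)
    have h2 : (θ (src e) - θ (tgt e))^2 = 0 := by
      rcases mul_eq_zero.1 this with h | h
      · exact absurd h (hB e).ne'
      · exact h
    have := pow_eq_zero_iff (n := 2) (by norm_num) |>.1 h2
    linarith [sub_eq_zero.1 this]
  -- connectivity: θ constant = 0
  have hconst : ∀ v, θ v = 0 := by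
    intro v
    have key : ∀ a b, Relation.ReflTransGen (edgeAdj src tgt univ) a b → θ a = θ b := by
      intro a b h
      induction h with
      | refl => rfl
      | tail _ hstep ih =>
        rcases hstep with ⟨e, _, ⟨h1, h2⟩ | ⟨h1, h2⟩⟩
        · rw [ih, ← h1, ← h2, hedge e]
        · rw [ih, ← h1, ← h2, hedge e]
    rw [key v (Fin.last n) (hconn v (Fin.last n)), hlast]
  funext i
  have := hconst (Fin.castSucc i)
  rwa [hθ, scc_pad_castSucc] at this

lemma scc_rlap_isUnit (hB : ∀ e, 0 < B e) (hs : ∀ e, src e ≠ tgt e)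
    (hconn : ConnectedOn src tgt Finset.univ) :
    IsUnit (rlap src tgt B) := by
  rw [← Matrix.mulVec_injective_iff_isUnit]
  intro x y hxy
  have : rlap src tgt B *ᵥ (x - y) = 0 := by
    rw [Matrix.mulVec_sub, hxy, sub_self]
  have := scc_rlap_ker src tgt B hB hs hconn _ this
  exact sub_eq_zero.1 this

section Aux3
variable (src tgt : Fin m → Fin (n + 1)) (B : Fin m → ℝ)

lemma scc_theta_eq (q : Fin (n+1) → ℝ) :
    Amat src tgt B *ᵥ q
      = scc_pad ((rlap src tgt B)⁻¹ *ᵥ (fun i => q (Fin.castSucc i))) := by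
  funext w
  by_cases hw : w = Fin.last n
  · subst hw
    have : ∀ j, Amat src tgt B (Fin.last n) j = 0 := fun j => by simp [Amat]
    simp [Matrix.mulVec, dotProduct, this, scc_pad]
  · simp only [Matrix.mulVec, dotProduct]
    rw [Fin.sum_univ_castSucc (f := fun j => Amat src tgt B w j * q j)]
    have h1 : Amat src tgt B w (Fin.last n) = 0 := by simp [Amat]
    rw [h1, zero_mul, add_zero]
    rw [show scc_pad ((rlap src tgt B)⁻¹ *ᵥ fun i => q (Fin.castSucc i)) w
        = ((rlap src tgt B)⁻¹ *ᵥ fun i => q (Fin.castSucc i)) (w.castPred hw) from by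
      simp [scc_pad, hw]]
    simp only [Matrix.mulVec, dotProduct]
    refine Finset.sum_congr rfl fun i _ => ?_
    congr 1
    simp [Amat, hw, (Fin.castSucc_lt_last i).ne]

lemma scc_col_sum (hs : ∀ e, src e ≠ tgt e) (e : Fin m) :
    ∑ v, incMat src tgt v e = 0 := by
  have := scc_sum_inc src tgt hs (fun _ => 1) e
  simpa using this

lemma scc_lap_total (hs : ∀ e, src e ≠ tgt e) (θ : Fin (n+1) → ℝ) :
    ∑ x, (lap src tgt B *ᵥ θ) x = 0 := by
  rw [Finset.sum_congr rfl (fun x _ => scc_lap_mulVec src tgt B hs θ x), Finset.sum_comm]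
  refine Finset.sum_eq_zero fun e _ => ?_
  rw [← Finset.sum_mul, scc_col_sum src tgt hs, zero_mul]

lemma scc_conservation (hB : ∀ e, 0 < B e) (hs : ∀ e, src e ≠ tgt e)
    (hconn : ConnectedOn src tgt Finset.univ)
    (q : Fin (n+1) → ℝ) (hq : ∑ v, q v = 0) :
    lap src tgt B *ᵥ (Amat src tgt B *ᵥ q) = q := by
  have hdet : IsUnit (rlap src tgt B).det :=
    (Matrix.isUnit_iff_isUnit_det _).1 (scc_rlap_isUnit src tgt B hB hs hconn)
  have hcast : ∀ v : Fin n,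
      (lap src tgt B *ᵥ (Amat src tgt B *ᵥ q)) (Fin.castSucc v) = q (Fin.castSucc v) := by
    intro v
    rw [scc_theta_eq, scc_rlap_pad, Matrix.mulVec_mulVec,
      Matrix.mul_nonsing_inv _ hdet, Matrix.one_mulVec]
  funext x
  by_cases hx : x = Fin.last n
  · subst hx
    have h1 := scc_lap_total src tgt B hs (Amat src tgt B *ᵥ q)
    rw [Fin.sum_univ_castSucc] at h1 hq
    rw [Finset.sum_congr rfl (fun v _ => hcast v)] at h1
    linarith
  · rw [← Fin.castSucc_castPred x hx]
    exact hcast _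

end Aux3

/-- Edge `e` joins `x` and `y` in some orientation. -/
def scc_Conn (src tgt : Fin m → Fin (n + 1)) (e : Fin m) (x y : Fin (n+1)) : Prop :=
  (src e = x ∧ tgt e = y) ∨ (src e = y ∧ tgt e = x)

lemma scc_Conn_symm {src tgt : Fin m → Fin (n + 1)} {e : Fin m} {x y : Fin (n+1)}
    (h : scc_Conn src tgt e x y) : scc_Conn src tgt e y x := h.symm

section Aux4
variable (src tgt : Fin m → Fin (n + 1)) (B : Fin m → ℝ)

lemma scc_step (hB : ∀ e, 0 < B e) (θ q : Fin (n+1) → ℝ)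
    (hcons : ∀ x, ∑ e, incMat src tgt x e * (B e * (θ (src e) - θ (tgt e))) = q x)
    (x : Fin (n+1)) (hq : 0 ≤ q x)
    (hin : ∃ e y, scc_Conn src tgt e x y ∧ θ x < θ y) :
    ∃ e y, scc_Conn src tgt e x y ∧ θ y < θ x := by
  by_contra hcon
  push_neg at hcon
  obtain ⟨e0, y0, hc0, hlt0⟩ := hin
  have hterm : ∀ e, incMat src tgt x e * (B e * (θ (src e) - θ (tgt e))) ≤ 0 := by
    intro e
    by_cases h1 : src e = x
    · have hle := hcon e (tgt e) (Or.inl ⟨h1, rfl⟩)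
      have : incMat src tgt x e = 1 := by simp [incMat, h1]
      rw [this, one_mul]
      have := mul_nonneg (hB e).le (by linarith [h1 ▸ hle] : (0:ℝ) ≤ θ (tgt e) - θ (src e))
      nlinarith
    · by_cases h2 : tgt e = x
      · have hle := hcon e (src e) (Or.inr ⟨rfl, h2⟩)
        have : incMat src tgt x e = -1 := by simp [incMat, h1, h2]
        rw [this]
        have := mul_nonneg (hB e).le (by linarith [h2 ▸ hle] : (0:ℝ) ≤ θ (src e) - θ (tgt e))
        nlinarith
      · have : incMat src tgt x e = 0 := by simp [incMat, h1, h2]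
        rw [this, zero_mul]
  have hstrict : incMat src tgt x e0 * (B e0 * (θ (src e0) - θ (tgt e0))) < 0 := by
    rcases hc0 with ⟨h1, h2⟩ | ⟨h1, h2⟩
    · have : incMat src tgt x e0 = 1 := by simp [incMat, h1]
      rw [this, one_mul, h1, h2]
      have := mul_pos (hB e0) (by linarith : (0:ℝ) < θ y0 - θ x)
      nlinarith
    · have hne : src e0 ≠ x := by rw [h1]; intro h; rw [h] at hlt0; linarith
      have : incMat src tgt x e0 = -1 := by simp [incMat, hne, h2]
      rw [this, h1, h2]
      have := mul_pos (hB e0) (by linarith : (0:ℝ) < θ y0 - θ x)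
      nlinarith
  have hsum : ∑ e, incMat src tgt x e * (B e * (θ (src e) - θ (tgt e))) < 0 := by
    calc ∑ e, incMat src tgt x e * (B e * (θ (src e) - θ (tgt e)))
        < ∑ _e : Fin m, (0:ℝ) :=
          Finset.sum_lt_sum (fun i _ => hterm i) ⟨e0, mem_univ e0, hstrict⟩
      _ = 0 := by simp
  rw [hcons x] at hsum
  linarith

lemma scc_descend (θ : Fin (n+1) → ℝ) (sink : Fin (n+1))
    (hstep : ∀ x, x ≠ sink → (∃ e y, scc_Conn src tgt e x y ∧ θ x < θ y) →
      ∃ e y, scc_Conn src tgt e x y ∧ θ y < θ x) :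
    ∀ (N : ℕ) (x : Fin (n+1)), (univ.filter fun z => θ z < θ x).card ≤ N →
      (∃ e y, scc_Conn src tgt e x y ∧ θ x < θ y) →
      ∃ (s : ℕ) (w : Fin (s+1) → Fin (n+1)) (ew : Fin s → Fin m),
        w 0 = x ∧ w (Fin.last s) = sink ∧
        (∀ t : Fin s, scc_Conn src tgt (ew t) (w t.castSucc) (w t.succ)) ∧
        (∀ t : Fin s, θ (w t.succ) < θ (w t.castSucc)) := by
  intro N
  induction N with
  | zero =>
    intro x hcard hin
    by_cases hx : x = sink
    · exact ⟨0, fun _ => x, Fin.elim0, rfl, hx, fun t => t.elim0, fun t => t.elim0⟩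
    · obtain ⟨e, y, hc, hlt⟩ := hstep x hx hin
      have : y ∈ univ.filter fun z => θ z < θ x := by simp [hlt]
      have := Finset.card_pos.2 ⟨y, this⟩
      omega
  | succ N ih =>
    intro x hcard hin
    by_cases hx : x = sink
    · exact ⟨0, fun _ => x, Fin.elim0, rfl, hx, fun t => t.elim0, fun t => t.elim0⟩
    · obtain ⟨e, y, hc, hlt⟩ := hstep x hx hin
      have hss : (univ.filter fun z => θ z < θ y) ⊂ (univ.filter fun z => θ z < θ x) := by
        constructor
        · intro z hz
          simp only [mem_filter, mem_univ, true_and] at hz ⊢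
          linarith
        · intro hsub
          have : y ∈ univ.filter fun z => θ z < θ x := by simp [hlt]
          have := hsub this
          simp only [mem_filter, mem_univ, true_and] at this
          linarith
      have hcard' : (univ.filter fun z => θ z < θ y).card ≤ N := by
        have := Finset.card_lt_card hss
        omega
      obtain ⟨s, w, ew, hw0, hwl, hwadj, hwdec⟩ :=
        ih y hcard' ⟨e, x, scc_Conn_symm hc, hlt⟩
      refine ⟨s + 1, Fin.cons x w, Fin.cons e ew, Fin.cons_zero _ _, ?_, ?_, ?_⟩
      · rw [show Fin.last (s+1) = (Fin.last s).succ from rfl, Fin.cons_succ]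
        exact hwl
      · intro t
        refine Fin.cases ?_ (fun i => ?_) t
        · simp only [Fin.cons_zero, Fin.castSucc_zero, Fin.succ_zero_eq_one]
          rw [show (1 : Fin (s+2)) = Fin.succ 0 from rfl, Fin.cons_succ, hw0]
          exact hc
        · rw [Fin.cons_succ, ← Fin.succ_castSucc, Fin.cons_succ, Fin.cons_succ]
          exact hwadj i
      · intro t
        refine Fin.cases ?_ (fun i => ?_) t
        · simp only [Fin.cons_zero, Fin.castSucc_zero, Fin.succ_zero_eq_one]
          rw [show (1 : Fin (s+2)) = Fin.succ 0 from rfl, Fin.cons_succ, hw0]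
          exact hlt
        · rw [← Fin.succ_castSucc, Fin.cons_succ, Fin.cons_succ]
          exact hwdec i

end Aux4

/-- Vertex sequence of the assembled cycle. -/
def scc_vs {r s : ℕ} (u : Fin (r+1) → Fin (n+1)) (w : Fin (s+1) → Fin (n+1)) :
    Fin (r+s+2) → Fin (n+1) :=
  fun t => if h : t.val ≤ r then u ⟨r - t.val, by omega⟩
    else w ⟨t.val - (r+1), by have := t.isLt; omega⟩

/-- Edge sequence of the assembled cycle. -/
def scc_es {r s : ℕ} (eu : Fin r → Fin m) (ew : Fin s → Fin m) (l lhat : Fin m) :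
    Fin (r+s+2) → Fin m :=
  fun t => if h : t.val < r then eu ⟨r - 1 - t.val, by omega⟩
    else if h2 : t.val = r then l
    else if h3 : t.val < r + s + 1 then ew ⟨t.val - (r+1), by have := t.isLt; omega⟩
    else lhat

section Aux5
variable {r s : ℕ} (u : Fin (r+1) → Fin (n+1)) (w : Fin (s+1) → Fin (n+1))
  (eu : Fin r → Fin m) (ew : Fin s → Fin m) (l lhat : Fin m)

lemma scc_vs_lo (t : Fin (r+s+2)) (h : t.val ≤ r) :
    scc_vs u w t = u ⟨r - t.val, by omega⟩ := dif_pos h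

lemma scc_vs_hi (t : Fin (r+s+2)) (h : r < t.val) :
    scc_vs u w t = w ⟨t.val - (r+1), by have := t.isLt; omega⟩ := dif_neg (not_le.2 h)

lemma scc_es_lo (t : Fin (r+s+2)) (h : t.val < r) :
    scc_es eu ew l lhat t = eu ⟨r - 1 - t.val, by omega⟩ := dif_pos h

lemma scc_es_l (t : Fin (r+s+2)) (h : t.val = r) :
    scc_es eu ew l lhat t = l := by
  rw [scc_es, dif_neg (by omega), dif_pos h]

lemma scc_es_mid (t : Fin (r+s+2)) (h1 : r < t.val) (h2 : t.val < r + s + 1) :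
    scc_es eu ew l lhat t = ew ⟨t.val - (r+1), by have := t.isLt; omega⟩ := by
  rw [scc_es, dif_neg (by omega), dif_neg (by omega), dif_pos h2]

lemma scc_es_last (t : Fin (r+s+2)) (h : t.val = r + s + 1) :
    scc_es eu ew l lhat t = lhat := by
  rw [scc_es, dif_neg (by omega), dif_neg (by omega), dif_neg (by omega)]

end Aux5

section Aux6
variable (src tgt : Fin m → Fin (n + 1))

lemma scc_assemble (θ : Fin (n+1) → ℝ) {r s : ℕ}
    (u : Fin (r+1) → Fin (n+1)) (w : Fin (s+1) → Fin (n+1))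
    (eu : Fin r → Fin m) (ew : Fin s → Fin m) (l lhat : Fin m) (hne : l ≠ lhat)
    (a b : Fin (n+1))
    (hu0 : u 0 = a) (hul : u (Fin.last r) = src lhat)
    (hw0 : w 0 = b) (hwl : w (Fin.last s) = tgt lhat)
    (huadj : ∀ t : Fin r, scc_Conn src tgt (eu t) (u t.castSucc) (u t.succ))
    (huinc : ∀ t : Fin r, θ (u t.castSucc) < θ (u t.succ))
    (hwadj : ∀ t : Fin s, scc_Conn src tgt (ew t) (w t.castSucc) (w t.succ))
    (hwdec : ∀ t : Fin s, θ (w t.succ) < θ (w t.castSucc))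
    (hconl : scc_Conn src tgt l a b) (hab : θ b < θ a) :
    ExistsSimpleCycleThrough src tgt l lhat := by
  -- value-indexed versions
  have huadjv : ∀ (je j1 j2 : ℕ) (he : je < r) (h1 : j1 < r+1) (h2 : j2 < r+1),
      j1 = je → j2 = je + 1 → scc_Conn src tgt (eu ⟨je, he⟩) (u ⟨j1, h1⟩) (u ⟨j2, h2⟩) := by
    intro je j1 j2 he h1 h2 e1 e2
    subst e1; subst e2
    exact huadj ⟨j1, he⟩
  have hwadjv : ∀ (je j1 j2 : ℕ) (he : je < s) (h1 : j1 < s+1) (h2 : j2 < s+1),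
      j1 = je → j2 = je + 1 → scc_Conn src tgt (ew ⟨je, he⟩) (w ⟨j1, h1⟩) (w ⟨j2, h2⟩) := by
    intro je j1 j2 he h1 h2 e1 e2
    subst e1; subst e2
    exact hwadj ⟨j1, he⟩
  have huincv : ∀ (j1 j2 : ℕ) (h1 : j1 < r+1) (h2 : j2 < r+1),
      j2 = j1 + 1 → θ (u ⟨j1, h1⟩) < θ (u ⟨j2, h2⟩) := by
    intro j1 j2 h1 h2 e1
    subst e1
    exact huinc ⟨j1, by omega⟩
  have hwdecv : ∀ (j1 j2 : ℕ) (h1 : j1 < s+1) (h2 : j2 < s+1),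
      j2 = j1 + 1 → θ (w ⟨j2, h2⟩) < θ (w ⟨j1, h1⟩) := by
    intro j1 j2 h1 h2 e1
    subst e1
    exact hwdec ⟨j1, by omega⟩
  have hu0v : ∀ (j : ℕ) (hj : j < r+1), j = 0 → u ⟨j, hj⟩ = a := by
    intro j hj h; subst h; exact hu0
  have hulv : ∀ (j : ℕ) (hj : j < r+1), j = r → u ⟨j, hj⟩ = src lhat := by
    intro j hj h; subst h; exact hul
  have hw0v : ∀ (j : ℕ) (hj : j < s+1), j = 0 → w ⟨j, hj⟩ = b := by
    intro j hj h; subst h; exact hw0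
  have hwlv : ∀ (j : ℕ) (hj : j < s+1), j = s → w ⟨j, hj⟩ = tgt lhat := by
    intro j hj h; subst h; exact hwl
  -- adjacency along the cycle
  have hadj : ∀ t : Fin (r+s+2),
      scc_Conn src tgt (scc_es eu ew l lhat t) (scc_vs u w t) (scc_vs u w (t+1)) := by
    intro t
    have htlt := t.isLt
    by_cases hlast : t = Fin.last (r+s+1)
    · have htv : t.val = r+s+1 := by rw [hlast]; rfl
      have hplus : (t+1).val = 0 := by rw [Fin.val_add_one, if_pos hlast]
      rw [scc_es_last _ _ _ _ t htv, scc_vs_hi _ _ t (by omega), scc_vs_lo _ _ (t+1) (by omega)]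
      rw [hwlv _ _ (by omega), hulv _ _ (by omega)]
      exact Or.inr ⟨rfl, rfl⟩
    · have hplus : (t+1).val = t.val + 1 := by rw [Fin.val_add_one, if_neg hlast]
      have htv : t.val ≤ r + s := by
        have : t.val ≠ r+s+1 := fun hh => hlast (Fin.ext (by rw [hh]; rfl))
        omega
      rcases lt_trichotomy t.val r with h | h | h
      · rw [scc_es_lo _ _ _ _ t h, scc_vs_lo _ _ t (by omega), scc_vs_lo _ _ (t+1) (by omega)]
        exact scc_Conn_symm (huadjv _ _ _ (by omega) (by omega) (by omega) (by omega) (by omega))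
      · rw [scc_es_l _ _ _ _ t h, scc_vs_lo _ _ t (by omega), scc_vs_hi _ _ (t+1) (by omega)]
        rw [hu0v _ _ (by omega), hw0v _ _ (by omega)]
        exact hconl
      · rw [scc_es_mid _ _ _ _ t h (by omega), scc_vs_hi _ _ t h, scc_vs_hi _ _ (t+1) (by omega)]
        exact hwadjv _ _ _ (by omega) (by omega) (by omega) (by omega) (by omega)
  -- strict antitonicity of the potential along the cycle
  have hanti : StrictAnti (fun t : Fin (r+s+2) => θ (scc_vs u w t)) := by
    rw [Fin.strictAnti_iff_succ_lt]
    intro i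
    have hiv := i.isLt
    have hcv : (Fin.castSucc i).val = i.val := rfl
    have hsv : (Fin.succ i).val = i.val + 1 := rfl
    show θ (scc_vs u w i.succ) < θ (scc_vs u w i.castSucc)
    rcases lt_trichotomy i.val r with h | h | h
    · rw [scc_vs_lo _ _ i.succ (by omega), scc_vs_lo _ _ i.castSucc (by omega)]
      exact huincv _ _ (by omega) (by omega) (by omega)
    · rw [scc_vs_hi _ _ i.succ (by omega), scc_vs_lo _ _ i.castSucc (by omega)]
      rw [hu0v (r - (Fin.castSucc i).val) (by omega) (by omega),
        hw0v ((Fin.succ i).val - (r+1)) (by omega) (by omega)]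
      exact hab
    · rw [scc_vs_hi _ _ i.succ (by omega), scc_vs_hi _ _ i.castSucc (by omega)]
      exact hwdecv _ _ (by omega) (by omega) (by omega)
  have hvs : Function.Injective (scc_vs u w) := by
    intro t t' h
    exact hanti.injective (congrArg θ h)
  -- injectivity of the edge sequence
  have hes : Function.Injective (scc_es eu ew l lhat) := by
    intro t t' h
    by_cases hk : r + s = 0
    · have ht := t.isLt
      have ht' := t'.isLt
      have hv : t.val = r ∨ t.val = r+s+1 := by omega
      have hv' : t'.val = r ∨ t'.val = r+s+1 := by omega
      rcases hv with h0 | h0 <;> rcases hv' with h0' | h0'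
      · exact Fin.ext (by omega)
      · exfalso
        rw [scc_es_l _ _ _ _ t h0, scc_es_last _ _ _ _ t' h0'] at h
        exact hne h
      · exfalso
        rw [scc_es_last _ _ _ _ t h0, scc_es_l _ _ _ _ t' h0'] at h
        exact hne h.symm
      · exact Fin.ext (by omega)
    · have h1 := hadj t
      have h2 := hadj t'
      rw [h] at h1
      have hcross : ¬ (t = t' + 1 ∧ t + 1 = t') := by
        rintro ⟨e1, e2⟩
        have e3 : t + 0 = t + (1 + 1) := by
          rw [add_zero, ← add_assoc, e2, ← e1]
        have e4 : (0 : Fin (r+s+2)) = 1 + 1 := add_left_cancel e3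
        have hne1 : (1 : Fin (r+s+2)) ≠ Fin.last (r+s+1) := by
          intro hh
          have := congrArg Fin.val hh
          rw [Fin.val_one, Fin.val_last] at this
          omega
        have e5 : ((1 : Fin (r+s+2)) + 1).val = 2 := by
          rw [Fin.val_add_one, if_neg hne1, Fin.val_one]
        have e6 := congrArg Fin.val e4
        rw [e5] at e6
        simp at e6
      rcases h1 with ⟨ha1, ha2⟩ | ⟨ha1, ha2⟩ <;> rcases h2 with ⟨hb1, hb2⟩ | ⟨hb1, hb2⟩
      · exact hvs (ha1.symm.trans hb1)
      · exact absurd ⟨hvs (ha1.symm.trans hb1), hvs (ha2.symm.trans hb2)⟩ hcross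
      · exact absurd ⟨hvs (ha2.symm.trans hb2), hvs (ha1.symm.trans hb1)⟩ hcross
      · exact add_right_cancel (hvs (ha1.symm.trans hb1))
  refine ⟨r + s, scc_es eu ew l lhat, scc_vs u w, hes, hvs, fun t => hadj t,
    ⟨⟨r, by omega⟩, scc_es_l _ _ _ _ _ rfl⟩, ⟨⟨r+s+1, by omega⟩, scc_es_last _ _ _ _ _ rfl⟩⟩

end Aux6

/-- **Simple Cycle Criterion, necessity.**
If the line outage distribution factor `K_{lℓ̂} = D_{lℓ̂}/(1 − D_{ℓ̂ℓ̂})` of a surviving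
line `l` with respect to a non-bridge outaged line `ℓ̂` is nonzero, then some simple cycle
of the graph contains both `l` and `ℓ̂`. -/
theorem simple_cycle_criterion_necessity
    (src tgt : Fin m → Fin (n + 1)) (B : Fin m → ℝ)
    (hB : ∀ e, 0 < B e)
    (hsimple : ∀ e, src e ≠ tgt e)
    (hconn : ConnectedOn src tgt Finset.univ)
    (lhat : Fin m)
    (hnb : ConnectedOn src tgt (Finset.univ.erase lhat))
    (l : Fin m) (hne : l ≠ lhat) :
    ptdf src tgt B l (src lhat) (tgt lhat)
        / (1 - ptdf src tgt B lhat (src lhat) (tgt lhat)) ≠ 0 →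
      ExistsSimpleCycleThrough src tgt l lhat := by
  intro hK
  have hD : ptdf src tgt B l (src lhat) (tgt lhat) ≠ 0 := by
    intro h
    apply hK
    rw [h, zero_div]
  classical
  set q : Fin (n+1) → ℝ :=
    fun v => (if v = src lhat then (1:ℝ) else 0) - (if v = tgt lhat then (1:ℝ) else 0)
    with hq
  have hqsum : ∑ v, q v = 0 := by
    rw [hq, Finset.sum_sub_distrib]
    simp [Finset.sum_ite_eq']
  set θ : Fin (n+1) → ℝ := Amat src tgt B *ᵥ q with hθdef
  have hcons0 : lap src tgt B *ᵥ θ = q :=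
    scc_conservation src tgt B hB hsimple hconn q hqsum
  have hcons : ∀ x, ∑ e, incMat src tgt x e * (B e * (θ (src e) - θ (tgt e))) = q x := by
    intro x
    rw [← scc_lap_mulVec src tgt B hsimple θ x, hcons0]
  have hθv : ∀ v, θ v = Amat src tgt B v (src lhat) - Amat src tgt B v (tgt lhat) := by
    intro v
    rw [hθdef]
    show (Amat src tgt B *ᵥ q) v = _
    simp only [Matrix.mulVec, dotProduct, hq, mul_sub, mul_ite, mul_one, mul_zero]
    rw [Finset.sum_sub_distrib, Finset.sum_ite_eq' univ (src lhat) (Amat src tgt B v),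
      Finset.sum_ite_eq' univ (tgt lhat) (Amat src tgt B v)]
    simp
  have hDform : ptdf src tgt B l (src lhat) (tgt lhat) = B l * (θ (src l) - θ (tgt l)) := by
    rw [ptdf, hθv, hθv]
    ring
  have hneq : θ (src l) ≠ θ (tgt l) := by
    intro h
    apply hD
    rw [hDform, h]
    ring
  have hstepθ : ∀ x, x ≠ tgt lhat → (∃ e y, scc_Conn src tgt e x y ∧ θ x < θ y) →
      ∃ e y, scc_Conn src tgt e x y ∧ θ y < θ x := by
    intro x hx
    apply scc_step src tgt B hB θ q hcons x
    rw [hq]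
    simp only [if_neg hx]
    split_ifs <;> norm_num
  have hstepneg : ∀ x, x ≠ src lhat →
      (∃ e y, scc_Conn src tgt e x y ∧ (fun v => -θ v) x < (fun v => -θ v) y) →
      ∃ e y, scc_Conn src tgt e x y ∧ (fun v => -θ v) y < (fun v => -θ v) x := by
    intro x hx
    have hcons' : ∀ x', ∑ e, incMat src tgt x' e
        * (B e * ((fun v => -θ v) (src e) - (fun v => -θ v) (tgt e))) = (fun v => -(q v)) x' := by
      intro x'
      have h1 : ∀ e : Fin m, incMat src tgt x' e * (B e * (-θ (src e) - -θ (tgt e)))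
          = -(incMat src tgt x' e * (B e * (θ (src e) - θ (tgt e)))) := fun e => by ring
      rw [Finset.sum_congr rfl (fun e _ => h1 e), Finset.sum_neg_distrib]
      show -(∑ e, _) = _
      rw [hcons x']
    apply scc_step src tgt B hB (fun v => -θ v) (fun v => -(q v)) hcons' x
    show (0:ℝ) ≤ -(q x)
    rw [hq]
    simp only [if_neg hx]
    split_ifs <;> norm_num
  obtain ⟨a, b, hconl, hab⟩ : ∃ a b, scc_Conn src tgt l a b ∧ θ b < θ a := by
    rcases lt_trichotomy (θ (tgt l)) (θ (src l)) with h | h | h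
    · exact ⟨src l, tgt l, Or.inl ⟨rfl, rfl⟩, h⟩
    · exact absurd h.symm hneq
    · exact ⟨tgt l, src l, Or.inr ⟨rfl, rfl⟩, h⟩
  obtain ⟨s, w, ew, hw0, hwl, hwadj, hwdec⟩ :=
    scc_descend src tgt θ (tgt lhat) hstepθ
      ((univ.filter fun z => θ z < θ b).card) b le_rfl ⟨l, a, scc_Conn_symm hconl, hab⟩
  obtain ⟨r, u, eu, hu0, hul, huadj, huinc⟩ :=
    scc_descend src tgt (fun v => -θ v) (src lhat) hstepneg
      ((univ.filter fun z => -θ z < -θ a).card) a le_rfl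
      ⟨l, b, hconl, by simpa using hab⟩
  exact scc_assemble src tgt θ u w eu ew l lhat hne a b hu0 hul hw0 hwl huadj
    (fun t => by have := huinc t; linarith) hwadj hwdec hconl hab
end Aux2
end

section
/- Failure localization for a single non-bridge outage (Corollary 2): Let ℓ̂ = (î, ĵ) be a non-bridge edge of the connected graph G and let l = (i, j) ≠ ℓ̂ be any other edge such that no simple cycle of G contains both l and ℓ̂ (i.e., l and ℓ̂ lie in different blocks of G). Then K_{lℓ̂} = 0 and D_{lℓ̂} = 0. Moreover, for any l ≠ ℓ̂, D_{lℓ̂} = 0 if and only if K_{lℓ̂} = 0. -/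
open Matrix Finset

variable {n m : ℕ}

/-!
The `ℓ̂`-column of the PTDF matrix is the line flow `B_e (θ (src e) - θ (tgt e))` of the potential
`θ = A (e_î - e_ĵ)`: a unit flow from `î` to `ĵ` that strictly decreases `θ` along its direction.
An edge `l` with nonzero flow therefore lies on a directed flow path from `î` to `ĵ`; along it
`θ` strictly decreases, so the path is simple, and closing it with `ℓ̂` gives a simple cycle
through `l` and `ℓ̂`. For the denominator, the energy identity `∑ B_e Δθ_e² = Δθ_ℓ̂` shows that
`D_ℓ̂ℓ̂ = B_ℓ̂ Δθ_ℓ̂ = 1` would make `Δθ` vanish on every other edge, hence on the connected graph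
`G - ℓ̂`, and then on `ℓ̂` itself.
-/

section Laplacian

variable {src tgt : Fin m → Fin (n + 1)} {B : Fin m → ℝ}

theorem vecMul_incMat (hsimple : ∀ e, src e ≠ tgt e) (x : Fin (n + 1) → ℝ) (e : Fin m) :
    (x ᵥ* incMat src tgt) e = x (src e) - x (tgt e) := by
  have hcol : (fun v => incMat src tgt v e) = Pi.single (src e) 1 - Pi.single (tgt e) 1 := by
    ext v
    have := hsimple e
    by_cases hs : src e = v <;> by_cases ht : tgt e = v <;> simp_all [incMat, eq_comm]
  rw [vecMul, hcol, dotProduct_sub, dotProduct_single, dotProduct_single, mul_one, mul_one]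

def lineFlow (src tgt : Fin m → Fin (n + 1)) (B : Fin m → ℝ) (x : Fin (n + 1) → ℝ) :
    Fin m → ℝ :=
  fun e => B e * (x (src e) - x (tgt e))

theorem lap_mulVec (hsimple : ∀ e, src e ≠ tgt e) (x : Fin (n + 1) → ℝ) :
    lap src tgt B *ᵥ x = incMat src tgt *ᵥ lineFlow src tgt B x := by
  rw [lap, ← mulVec_mulVec, ← mulVec_mulVec, mulVec_transpose]
  congr 1
  ext e
  rw [mulVec_diagonal, vecMul_incMat hsimple, lineFlow]

theorem dotProduct_lap_mulVec (hsimple : ∀ e, src e ≠ tgt e) (x : Fin (n + 1) → ℝ) :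
    x ⬝ᵥ (lap src tgt B *ᵥ x) = ∑ e, B e * (x (src e) - x (tgt e)) ^ 2 := by
  rw [lap_mulVec hsimple, dotProduct_mulVec, dotProduct]
  refine Finset.sum_congr rfl fun e _ => ?_
  rw [vecMul_incMat hsimple, lineFlow]
  ring

theorem sum_lap_mulVec (hsimple : ∀ e, src e ≠ tgt e) (x : Fin (n + 1) → ℝ) :
    ∑ v, (lap src tgt B *ᵥ x) v = 0 := by
  have h := dotProduct_mulVec (fun _ => (1 : ℝ)) (incMat src tgt) (lineFlow src tgt B x)
  simpa [dotProduct, vecMul_incMat hsimple, lap_mulVec hsimple] using h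

theorem sub_eq_sum_mul_of_incMat_mulVec_eq (hsimple : ∀ e, src e ≠ tgt e) {f : Fin m → ℝ}
    {a b : Fin (n + 1)} (hcons : incMat src tgt *ᵥ f = Pi.single a 1 - Pi.single b 1)
    (g : Fin (n + 1) → ℝ) : g a - g b = ∑ e, (g (src e) - g (tgt e)) * f e := by
  calc g a - g b = g ⬝ᵥ (incMat src tgt *ᵥ f) := by
        rw [hcons, dotProduct_sub, dotProduct_single, dotProduct_single, mul_one, mul_one]
    _ = _ := by
        rw [dotProduct_mulVec]
        simp only [dotProduct, vecMul_incMat hsimple, mul_comm]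

theorem apply_eq_of_connectedOn {S : Finset (Fin m)} (hconn : ConnectedOn src tgt S)
    {x : Fin (n + 1) → ℝ} (hx : ∀ e ∈ S, x (src e) = x (tgt e)) (a b : Fin (n + 1)) :
    x a = x b := by
  induction hconn a b with
  | refl => rfl
  | tail _ hadj ih =>
    obtain ⟨e, he, ⟨hs, ht⟩ | ⟨hs, ht⟩⟩ := hadj
    · rw [ih, ← hs, hx e he, ht]
    · rw [ih, ← ht, ← hx e he, hs]

theorem apply_eq_of_sum_mul_sq_eq_zero (hB : ∀ e, 0 < B e) {S : Finset (Fin m)}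
    (hconn : ConnectedOn src tgt S) {x : Fin (n + 1) → ℝ}
    (hx : ∑ e ∈ S, B e * (x (src e) - x (tgt e)) ^ 2 = 0) (a b : Fin (n + 1)) :
    x a = x b := by
  refine apply_eq_of_connectedOn hconn (fun e he => ?_) a b
  have hterm := (Finset.sum_eq_zero_iff_of_nonneg fun e _ => by have := hB e; positivity).1 hx e he
  have := (hB e).ne'
  simp_all [sub_eq_zero]

theorem lap_mulVec_snoc_castSucc (y : Fin n → ℝ) (i : Fin n) :
    (lap src tgt B *ᵥ Fin.snoc y 0) i.castSucc = (rlap src tgt B *ᵥ y) i := by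
  simp [mulVec, dotProduct, Fin.sum_univ_castSucc, rlap]

theorem isUnit_det_rlap (hB : ∀ e, 0 < B e) (hsimple : ∀ e, src e ≠ tgt e)
    (hconn : ConnectedOn src tgt univ) : IsUnit (rlap src tgt B).det := by
  rw [isUnit_iff_ne_zero]
  intro hdet
  obtain ⟨y, hy0, hy⟩ := exists_mulVec_eq_zero_iff.2 hdet
  have henergy : ∑ e, B e * ((Fin.snoc y 0 : Fin (n + 1) → ℝ) (src e)
      - (Fin.snoc y 0 : Fin (n + 1) → ℝ) (tgt e)) ^ 2 = 0 := by
    rw [← dotProduct_lap_mulVec hsimple, dotProduct, Fin.sum_univ_castSucc]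
    simp [lap_mulVec_snoc_castSucc, hy]
  refine hy0 (funext fun i => ?_)
  simpa using apply_eq_of_sum_mul_sq_eq_zero hB hconn henergy i.castSucc (Fin.last n)

theorem Amat_mulVec (x : Fin (n + 1) → ℝ) :
    Amat src tgt B *ᵥ x = Fin.snoc ((rlap src tgt B)⁻¹ *ᵥ fun i => x i.castSucc) 0 := by
  ext v
  induction v using Fin.lastCases with
  | last => simp [Amat, mulVec, dotProduct]
  | cast i => simp [Amat, mulVec, dotProduct, Fin.sum_univ_castSucc]

theorem lap_mulVec_Amat_mulVec (hB : ∀ e, 0 < B e) (hsimple : ∀ e, src e ≠ tgt e)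
    (hconn : ConnectedOn src tgt univ) {x : Fin (n + 1) → ℝ} (hx : ∑ v, x v = 0) :
    lap src tgt B *ᵥ (Amat src tgt B *ᵥ x) = x := by
  have hcast : ∀ i : Fin n, (lap src tgt B *ᵥ (Amat src tgt B *ᵥ x)) i.castSucc = x i.castSucc := by
    intro i
    rw [Amat_mulVec, lap_mulVec_snoc_castSucc, mulVec_mulVec,
      mul_nonsing_inv _ (isUnit_det_rlap hB hsimple hconn), one_mulVec]
  ext v
  induction v using Fin.lastCases with
  | cast i => exact hcast i
  | last =>
    have hsum := sum_lap_mulVec (B := B) hsimple (Amat src tgt B *ᵥ x)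
    rw [Fin.sum_univ_castSucc] at hsum hx
    simp only [hcast] at hsum
    linarith

end Laplacian

section Potential

variable {src tgt : Fin m → Fin (n + 1)} {B : Fin m → ℝ}

noncomputable def transferPotential (src tgt : Fin m → Fin (n + 1)) (B : Fin m → ℝ)
    (a b : Fin (n + 1)) : Fin (n + 1) → ℝ :=
  Amat src tgt B *ᵥ (Pi.single a 1 - Pi.single b 1)

theorem ptdf_eq_lineFlow_transferPotential (l : Fin m) (a b : Fin (n + 1)) :
    ptdf src tgt B l a b = lineFlow src tgt B (transferPotential src tgt B a b) l := by
  simp only [ptdf, lineFlow, transferPotential, mulVec_sub, mulVec_single_one, Pi.sub_apply,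
    col_apply]
  ring

theorem lap_mulVec_transferPotential (hB : ∀ e, 0 < B e) (hsimple : ∀ e, src e ≠ tgt e)
    (hconn : ConnectedOn src tgt univ) (a b : Fin (n + 1)) :
    lap src tgt B *ᵥ transferPotential src tgt B a b = Pi.single a 1 - Pi.single b 1 :=
  lap_mulVec_Amat_mulVec hB hsimple hconn (by simp [Finset.sum_sub_distrib])

theorem sum_mul_sq_transferPotential (hB : ∀ e, 0 < B e) (hsimple : ∀ e, src e ≠ tgt e)
    (hconn : ConnectedOn src tgt univ) (a b : Fin (n + 1)) :
    ∑ e, B e * (transferPotential src tgt B a b (src e)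
        - transferPotential src tgt B a b (tgt e)) ^ 2
      = transferPotential src tgt B a b a - transferPotential src tgt B a b b := by
  rw [← dotProduct_lap_mulVec hsimple, lap_mulVec_transferPotential hB hsimple hconn,
    dotProduct_sub, dotProduct_single, dotProduct_single, mul_one, mul_one]

theorem ptdf_self_ne_one (hB : ∀ e, 0 < B e) (hsimple : ∀ e, src e ≠ tgt e)
    (hconn : ConnectedOn src tgt univ) {lhat : Fin m}
    (hnb : ConnectedOn src tgt (univ.erase lhat)) :
    ptdf src tgt B lhat (src lhat) (tgt lhat) ≠ 1 := by
  intro hone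
  rw [ptdf_eq_lineFlow_transferPotential, lineFlow] at hone
  have henergy := sum_mul_sq_transferPotential hB hsimple hconn (src lhat) (tgt lhat)
  rw [← Finset.add_sum_erase _ _ (mem_univ lhat)] at henergy
  set θ := transferPotential src tgt B (src lhat) (tgt lhat)
  have hrest : ∑ e ∈ univ.erase lhat, B e * (θ (src e) - θ (tgt e)) ^ 2 = 0 := by
    linear_combination henergy - (θ (src lhat) - θ (tgt lhat)) * hone
  rw [apply_eq_of_sum_mul_sq_eq_zero hB hnb hrest (src lhat) (tgt lhat), sub_self,
    mul_zero] at hone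
  exact zero_ne_one hone

end Potential

section FlowPath

open Relation

variable {src tgt : Fin m → Fin (n + 1)} {f : Fin m → ℝ} {θ : Fin (n + 1) → ℝ}
  {a b x y : Fin (n + 1)} {e l : Fin m}

def FlowStep (src tgt : Fin m → Fin (n + 1)) (f : Fin m → ℝ) (x y : Fin (n + 1))
    (e : Fin m) : Prop :=
  (src e = x ∧ tgt e = y ∧ 0 < f e) ∨ (src e = y ∧ tgt e = x ∧ f e < 0)

def FlowAdj (src tgt : Fin m → Fin (n + 1)) (f : Fin m → ℝ) (x y : Fin (n + 1)) : Prop :=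
  ∃ e, FlowStep src tgt f x y e

theorem flowStep_neg : FlowStep src tgt (-f) x y e ↔ FlowStep src tgt f y x e := by
  simp only [FlowStep, Pi.neg_apply, neg_pos, neg_lt_zero]
  tauto

theorem flowStep_or_flowStep (h : f e ≠ 0) :
    FlowStep src tgt f (src e) (tgt e) e ∨ FlowStep src tgt f (tgt e) (src e) e := by
  rcases h.lt_or_gt with h | h
  exacts [Or.inr (Or.inr ⟨rfl, rfl, h⟩), Or.inl (Or.inl ⟨rfl, rfl, h⟩)]

theorem FlowStep.abs_pos (h : FlowStep src tgt f x y e) : 0 < |f e| := by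
  rcases h with ⟨-, -, h⟩ | ⟨-, -, h⟩
  exacts [abs_pos_of_pos h, abs_pos_of_neg h]

theorem FlowStep.unique {x' y' : Fin (n + 1)} (h : FlowStep src tgt f x y e)
    (h' : FlowStep src tgt f x' y' e) : x = x' ∧ y = y' := by
  rcases h with ⟨rfl, rfl, h⟩ | ⟨rfl, rfl, h⟩ <;>
    rcases h' with ⟨hs, ht, h'⟩ | ⟨hs, ht, h'⟩
  all_goals first | exact ⟨hs, ht⟩ | exact ⟨ht, hs⟩ | linarith

theorem FlowStep.sub_mul_eq (h : FlowStep src tgt f x y e) (g : Fin (n + 1) → ℝ) :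
    (g (src e) - g (tgt e)) * f e = (g x - g y) * |f e| := by
  rcases h with ⟨rfl, rfl, h⟩ | ⟨rfl, rfl, h⟩
  · rw [abs_of_pos h]
  · rw [abs_of_neg h]
    ring

theorem FlowStep.lt_of_lineFlow {B : Fin m → ℝ} (hB : ∀ e, 0 < B e)
    (h : FlowStep src tgt (lineFlow src tgt B θ) x y e) : θ y < θ x := by
  rcases h with ⟨rfl, rfl, h⟩ | ⟨rfl, rfl, h⟩
  · exact sub_pos.1 (pos_of_mul_pos_right h (hB e).le)
  · exact sub_neg.1 (neg_of_mul_neg_right h (hB e).le)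

theorem le_of_reflTransGen_flowAdj (hdec : ∀ x y e, FlowStep src tgt f x y e → θ y < θ x)
    (h : ReflTransGen (FlowAdj src tgt f) x y) : θ y ≤ θ x := by
  induction h with
  | refl => exact le_rfl
  | tail _ hadj ih =>
    obtain ⟨e, he⟩ := hadj
    exact (hdec _ _ _ he).le.trans ih

/-- Cut argument: no flow leaves the set `R` of nodes reachable downstream from `y`, while `l`
brings flow into it from `x ∉ R`; so the net outflow `[a ∈ R] - [b ∈ R]` of `R` is negative. -/
theorem reflTransGen_flowAdj_sink (hsimple : ∀ e, src e ≠ tgt e)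
    (hcons : incMat src tgt *ᵥ f = Pi.single a 1 - Pi.single b 1)
    (hdec : ∀ x y e, FlowStep src tgt f x y e → θ y < θ x) (hl : FlowStep src tgt f x y l) :
    ReflTransGen (FlowAdj src tgt f) y b := by
  classical
  set R := ReflTransGen (FlowAdj src tgt f) y
  set χ : Fin (n + 1) → ℝ := fun v => if R v then 1 else 0
  have hχ : ∀ {u v e}, FlowStep src tgt f u v e → χ u ≤ χ v := by
    intro u v e h
    by_cases hu : R u
    · have hv : R v := hu.tail ⟨e, h⟩
      simp [χ, hu, hv]
    · simp only [χ, hu, if_false]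
      split_ifs <;> norm_num
  have hx : ¬ R x := fun hx =>
    (hdec _ _ _ hl).not_ge (le_of_reflTransGen_flowAdj hdec hx)
  have hneg : χ a - χ b < 0 := by
    rw [sub_eq_sum_mul_of_incMat_mulVec_eq hsimple hcons]
    refine Finset.sum_neg' (fun e _ => ?_) ⟨l, mem_univ l, ?_⟩
    · by_cases he : f e = 0
      · rw [he, mul_zero]
      · obtain h | h := flowStep_or_flowStep (src := src) (tgt := tgt) he <;>
          rw [h.sub_mul_eq] <;>
          exact mul_nonpos_of_nonpos_of_nonneg (sub_nonpos.2 (hχ h)) (abs_nonneg _)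
    · rw [hl.sub_mul_eq]
      have hy : R y := ReflTransGen.refl
      simp only [χ, hx, hy, if_true, if_false]
      linarith [hl.abs_pos]
  by_contra hb
  have : 0 ≤ χ a := by simp only [χ]; split_ifs <;> norm_num
  simp only [χ, hb, if_false] at hneg
  linarith

theorem reflTransGen_flowAdj_source (hsimple : ∀ e, src e ≠ tgt e)
    (hcons : incMat src tgt *ᵥ f = Pi.single a 1 - Pi.single b 1)
    (hdec : ∀ x y e, FlowStep src tgt f x y e → θ y < θ x) (hl : FlowStep src tgt f x y l) :
    ReflTransGen (FlowAdj src tgt f) a x := by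
  have hadj : FlowAdj src tgt (-f) = Function.swap (FlowAdj src tgt f) := by
    ext u v
    simp only [FlowAdj, flowStep_neg, Function.swap]
  have h := reflTransGen_flowAdj_sink (f := -f) (θ := -θ) (a := b) (b := a) hsimple
    (by rw [mulVec_neg, hcons, neg_sub])
    (fun u v e he => neg_lt_neg (hdec _ _ _ (flowStep_neg.1 he))) (flowStep_neg.2 hl)
  rwa [hadj, reflTransGen_swap] at h

def IsFlowPath (src tgt : Fin m → Fin (n + 1)) (f : Fin m → ℝ) {k : ℕ} (es : Fin k → Fin m)
    (vs : Fin (k + 1) → Fin (n + 1)) : Prop :=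
  ∀ t : Fin k, FlowStep src tgt f (vs t.castSucc) (vs t.succ) (es t)

namespace IsFlowPath

variable {k : ℕ} {es : Fin k → Fin m} {vs : Fin (k + 1) → Fin (n + 1)}

theorem cons (hp : IsFlowPath src tgt f es vs) (h : FlowStep src tgt f x (vs 0) e) :
    IsFlowPath src tgt f (Fin.cons e es) (Fin.cons x vs) := by
  intro t
  induction t using Fin.cases with
  | zero => simpa using h
  | succ s => simpa [← Fin.succ_castSucc] using hp s

theorem prepend (hp : IsFlowPath src tgt f es vs) (h : ReflTransGen (FlowAdj src tgt f) x (vs 0)) :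
    ∃ (k' : ℕ) (es' : Fin k' → Fin m) (vs' : Fin (k' + 1) → Fin (n + 1)),
      IsFlowPath src tgt f es' vs' ∧ vs' 0 = x ∧ vs' (Fin.last k') = vs (Fin.last k) ∧
        Set.range es ⊆ Set.range es' := by
  induction h using ReflTransGen.head_induction_on with
  | refl => exact ⟨k, es, vs, hp, rfl, rfl, subset_rfl⟩
  | head hadj _ ih =>
    obtain ⟨e, he⟩ := hadj
    obtain ⟨k', es', vs', hp', h0, hlast, hsub⟩ := ih
    refine ⟨k' + 1, Fin.cons e es', Fin.cons _ vs', hp'.cons (h0 ▸ he), rfl, ?_, ?_⟩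
    · rwa [← Fin.succ_last, Fin.cons_succ]
    · rw [Fin.range_cons]
      exact hsub.trans (Set.subset_insert _ _)

theorem injective (hdec : ∀ x y e, FlowStep src tgt f x y e → θ y < θ x)
    (hp : IsFlowPath src tgt f es vs) : Function.Injective vs :=
  (Fin.strictAnti_iff_succ_lt.2 fun t => hdec _ _ _ (hp t) : StrictAnti (θ ∘ vs)).injective.of_comp

theorem injective_edges (hp : IsFlowPath src tgt f es vs) (hv : Function.Injective vs) :
    Function.Injective es := fun p q h =>
  Fin.castSucc_injective _ (hv ((h ▸ hp p).unique (hp q)).1)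

end IsFlowPath

theorem exists_isFlowPath_through (hsimple : ∀ e, src e ≠ tgt e)
    (hcons : incMat src tgt *ᵥ f = Pi.single a 1 - Pi.single b 1)
    (hdec : ∀ x y e, FlowStep src tgt f x y e → θ y < θ x) (hl : FlowStep src tgt f x y l) :
    ∃ (k : ℕ) (es : Fin k → Fin m) (vs : Fin (k + 1) → Fin (n + 1)),
      IsFlowPath src tgt f es vs ∧ vs 0 = a ∧ vs (Fin.last k) = b ∧ l ∈ Set.range es := by
  have hnil : IsFlowPath src tgt f (k := 0) Fin.elim0 fun _ => b := fun t => t.elim0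
  obtain ⟨k, es, vs, hp, h0, hlast, -⟩ :=
    hnil.prepend (reflTransGen_flowAdj_sink hsimple hcons hdec hl)
  obtain ⟨k', es', vs', hp', h0', hlast', hsub⟩ :=
    (hp.cons (h0 ▸ hl)).prepend (reflTransGen_flowAdj_source hsimple hcons hdec hl)
  refine ⟨k', es', vs', hp', h0', ?_, hsub ⟨0, rfl⟩⟩
  rwa [hlast', ← Fin.succ_last, Fin.cons_succ]

theorem existsSimpleCycleThrough_of_isFlowPath {k : ℕ} {es : Fin k → Fin m}
    {vs : Fin (k + 1) → Fin (n + 1)} {lhat : Fin m} (hp : IsFlowPath src tgt f es vs)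
    (hv : Function.Injective vs) (h0 : vs 0 = src lhat) (hlast : vs (Fin.last k) = tgt lhat)
    (hl : l ∈ Set.range es) (hne : l ≠ lhat) : ExistsSimpleCycleThrough src tgt l lhat := by
  obtain ⟨t, rfl⟩ := hl
  cases k with
  | zero => exact t.elim0
  | succ κ =>
  have hlhat : lhat ∉ Set.range es := by
    rintro ⟨p, hpl⟩
    rcases hp p with ⟨hs, ht, -⟩ | ⟨hs, -, -⟩
    · have h1 : p.castSucc = 0 := hv (by rw [← hs, hpl, h0])
      have h2 : p.succ = Fin.last _ := hv (by rw [← ht, hpl, hlast])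
      have hp_last : p = Fin.last κ := Fin.succ_injective _ (h2.trans (Fin.succ_last κ).symm)
      have hκ : κ = 0 := by simpa [hp_last] using congrArg Fin.val h1
      subst hκ
      exact hne (Fin.subsingleton_one.elim t p ▸ hpl)
    · exact Fin.succ_ne_zero p (hv (by rw [← hs, hpl, h0]))
  refine ⟨κ, Fin.snoc es lhat, vs, Fin.snoc_injective_of_injective (hp.injective_edges hv) hlhat,
    hv, fun s => ?_, ⟨t.castSucc, Fin.snoc_castSucc ..⟩, ⟨Fin.last _, Fin.snoc_last ..⟩⟩
  induction s using Fin.lastCases with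
  | last => exact Or.inr (by simp [Fin.last_add_one, h0, hlast])
  | cast p =>
    rw [Fin.snoc_castSucc, Fin.coeSucc_eq_succ]
    rcases hp p with ⟨hs, ht, -⟩ | ⟨hs, ht, -⟩
    exacts [Or.inl ⟨hs, ht⟩, Or.inr ⟨hs, ht⟩]

end FlowPath

theorem existsSimpleCycleThrough_of_ptdf_ne_zero {src tgt : Fin m → Fin (n + 1)}
    {B : Fin m → ℝ} (hB : ∀ e, 0 < B e) (hsimple : ∀ e, src e ≠ tgt e)
    (hconn : ConnectedOn src tgt univ) {l lhat : Fin m} (hne : l ≠ lhat)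
    (hD : ptdf src tgt B l (src lhat) (tgt lhat) ≠ 0) :
    ExistsSimpleCycleThrough src tgt l lhat := by
  rw [ptdf_eq_lineFlow_transferPotential] at hD
  set θ := transferPotential src tgt B (src lhat) (tgt lhat)
  have hcons : incMat src tgt *ᵥ lineFlow src tgt B θ
      = Pi.single (src lhat) 1 - Pi.single (tgt lhat) 1 := by
    rw [← lap_mulVec hsimple, lap_mulVec_transferPotential hB hsimple hconn]
  have hdec : ∀ x y e, FlowStep src tgt (lineFlow src tgt B θ) x y e → θ y < θ x :=
    fun _ _ _ h => h.lt_of_lineFlow hB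
  obtain ⟨x, y, hl⟩ : ∃ x y, FlowStep src tgt (lineFlow src tgt B θ) x y l :=
    (flowStep_or_flowStep hD).elim (fun h => ⟨_, _, h⟩) (fun h => ⟨_, _, h⟩)
  obtain ⟨k, es, vs, hp, h0, hlast, hl⟩ := exists_isFlowPath_through hsimple hcons hdec hl
  exact existsSimpleCycleThrough_of_isFlowPath hp (hp.injective hdec) h0 hlast hl hne

/-- **Failure localization for a single non-bridge outage, Corollary 2.**
For a non-bridge line `ℓ̂`: if no simple cycle contains a surviving line `l` together with
`ℓ̂` (i.e. they lie in different blocks), then `K_{lℓ̂} = 0` and `D_{lℓ̂} = 0`; moreover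
for any surviving line `l`, `D_{lℓ̂} = 0` if and only if `K_{lℓ̂} = 0`. -/
theorem failure_localization_non_bridge
    (src tgt : Fin m → Fin (n + 1)) (B : Fin m → ℝ)
    (hB : ∀ e, 0 < B e)
    (hsimple : ∀ e, src e ≠ tgt e)
    (hconn : ConnectedOn src tgt Finset.univ)
    (lhat : Fin m)
    (hnb : ConnectedOn src tgt (Finset.univ.erase lhat)) :
    (∀ l : Fin m, l ≠ lhat → ¬ ExistsSimpleCycleThrough src tgt l lhat →
        ptdf src tgt B l (src lhat) (tgt lhat)
            / (1 - ptdf src tgt B lhat (src lhat) (tgt lhat)) = 0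
          ∧ ptdf src tgt B l (src lhat) (tgt lhat) = 0)
      ∧ (∀ l : Fin m, l ≠ lhat →
          (ptdf src tgt B l (src lhat) (tgt lhat) = 0 ↔
            ptdf src tgt B l (src lhat) (tgt lhat)
              / (1 - ptdf src tgt B lhat (src lhat) (tgt lhat)) = 0)) := by
  have hden : 1 - ptdf src tgt B lhat (src lhat) (tgt lhat) ≠ 0 :=
    sub_ne_zero.2 (ptdf_self_ne_one hB hsimple hconn hnb).symm
  refine ⟨fun l hne hcyc => ?_, fun l _ => by rw [div_eq_zero_iff, or_iff_left hden]⟩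
  have hD : ptdf src tgt B l (src lhat) (tgt lhat) = 0 := by
    by_contra hD
    exact hcyc (existsSimpleCycleThrough_of_ptdf_ne_zero hB hsimple hconn hne hD)
  exact ⟨by rw [hD, zero_div], hD⟩
end
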